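/- arXiv:2511.20303 — 10 statements merged into one kernel-verified Lean document; each statement's English description precedes it below -/
import Mathlib

section
/- Let X be a real Banach space and let f : X → ℝ ∪ {+∞} be a proper extended-real-valued function. Assume there exist a continuous linear functional x̲* ∈ X* and β̲ ∈ ℝ such that ⟨x̲*, x⟩ + β̲ ≤ f(x) for all x ∈ X. Then epi(f**) = cl co epi(f), i.e. the epigraph of the biconjugate of f equals the closure of the convex hull of the epigraph of f in X × ℝ. -/
open Set

noncomputable def conjugateFn {X : Type*} [NormedAddCommGroup X] [NormedSpace ℝ X]
    (f : X → EReal) (p : X →L[ℝ] ℝ) : EReal :=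
  ⨆ x : X, ((p x : EReal) - f x)

noncomputable def biconjugateFn {X : Type*} [NormedAddCommGroup X] [NormedSpace ℝ X]
    (f : X → EReal) (x : X) : EReal :=
  ⨆ p : X →L[ℝ] ℝ, ((p x : EReal) - conjugateFn f p)

def epigraph {X : Type*} (f : X → EReal) : Set (X × ℝ) :=
  {q : X × ℝ | f q.1 ≤ (q.2 : EReal)}

section aux

variable {X : Type*} [NormedAddCommGroup X] [NormedSpace ℝ X]

lemma my_sub_le_comm {r : ℝ} {a b : EReal} (ha : a ≠ ⊥) (hb : b ≠ ⊥) :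
    (r : EReal) - a ≤ b ↔ (r : EReal) - b ≤ a := by
  induction a with
  | bot => simp at ha
  | top => simp [EReal.sub_top]
  | coe a =>
    induction b with
    | bot => simp at hb
    | top => simp [EReal.sub_top]
    | coe b =>
      rw [← EReal.coe_sub, ← EReal.coe_sub, EReal.coe_le_coe_iff, EReal.coe_le_coe_iff]
      constructor <;> intro <;> linarith

lemma le_conj (f : X → EReal) (p : X →L[ℝ] ℝ) (x : X) :
    (p x : EReal) - f x ≤ conjugateFn f p :=
  le_iSup (fun x => (p x : EReal) - f x) x

lemma conj_ne_bot (f : X → EReal) (hne_bot : ∀ x, f x ≠ ⊥) (hne_top : ∃ x, f x ≠ ⊤)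
    (p : X →L[ℝ] ℝ) : conjugateFn f p ≠ ⊥ := by
  obtain ⟨x, hx⟩ := hne_top
  obtain ⟨v, hv⟩ : ∃ v : ℝ, f x = (v : EReal) := by
    cases h : f x with
    | bot => exact absurd h (hne_bot x)
    | top => exact absurd h hx
    | coe v => exact ⟨v, rfl⟩
  have h1 : ((p x - v : ℝ) : EReal) ≤ conjugateFn f p := by
    have := le_conj f p x
    rwa [hv, ← EReal.coe_sub] at this
  intro h
  rw [h, le_bot_iff] at h1
  exact EReal.coe_ne_bot _ h1

lemma biconj_le (f : X → EReal) (hne_bot : ∀ x, f x ≠ ⊥) (hne_top : ∃ x, f x ≠ ⊤) (x : X) :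
    biconjugateFn f x ≤ f x := by
  refine iSup_le fun p => ?_
  rw [my_sub_le_comm (conj_ne_bot f hne_bot hne_top p) (hne_bot x)]
  exact le_conj f p x

lemma epi_biconj_eq (f : X → EReal) :
    epigraph (biconjugateFn f) =
      ⋂ p : X →L[ℝ] ℝ, {q : X × ℝ | (p q.1 : EReal) - conjugateFn f p ≤ (q.2 : EReal)} := by
  ext q
  simp [epigraph, biconjugateFn, iSup_le_iff, Set.mem_iInter]

lemma piece_closed_convex (c : EReal) (hc : c ≠ ⊥) (p : X →L[ℝ] ℝ) :
    IsClosed {q : X × ℝ | (p q.1 : EReal) - c ≤ (q.2 : EReal)} ∧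
      Convex ℝ {q : X × ℝ | (p q.1 : EReal) - c ≤ (q.2 : EReal)} := by
  induction c with
  | bot => simp at hc
  | top =>
    have h : {q : X × ℝ | (p q.1 : EReal) - ⊤ ≤ (q.2 : EReal)} = univ := by
      ext q; simp [EReal.sub_top]
    rw [h]; exact ⟨isClosed_univ, convex_univ⟩
  | coe cr =>
    have h : {q : X × ℝ | (p q.1 : EReal) - (cr : EReal) ≤ (q.2 : EReal)} =
        {q : X × ℝ | p q.1 - q.2 ≤ cr} := by
      ext q
      rw [mem_setOf_eq, mem_setOf_eq, ← EReal.coe_sub, EReal.coe_le_coe_iff]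
      constructor <;> intro <;> linarith
    rw [h]
    have hlin : IsLinearMap ℝ (fun q : X × ℝ => p q.1 - q.2) := by
      constructor
      · intro a b; simp [Prod.fst_add, Prod.snd_add, map_add]; ring
      · intro c a; simp [Prod.smul_fst, Prod.smul_snd, map_smul, smul_eq_mul]; ring
    refine ⟨isClosed_le ?_ continuous_const, convex_halfSpace_le hlin cr⟩
    exact (p.continuous.comp continuous_fst).sub continuous_snd

lemma epi_biconj_closed_convex (f : X → EReal) (hne_bot : ∀ x, f x ≠ ⊥)
    (hne_top : ∃ x, f x ≠ ⊤) :
    IsClosed (epigraph (biconjugateFn f)) ∧ Convex ℝ (epigraph (biconjugateFn f)) := by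
  rw [epi_biconj_eq]
  constructor
  · exact isClosed_iInter fun p => (piece_closed_convex _ (conj_ne_bot f hne_bot hne_top p) p).1
  · exact convex_iInter fun p => (piece_closed_convex _ (conj_ne_bot f hne_bot hne_top p) p).2

end aux

/-- **Fenchel–Moreau, epigraph form.** Let `X` be a real Banach space and
`f : X → ℝ ∪ {+∞}` a proper function which is minorized by a continuous affine function.
Then the epigraph of the biconjugate `f**` equals the closed convex hull of the
epigraph of `f`. -/
theorem stmt1 {X : Type*} [NormedAddCommGroup X] [NormedSpace ℝ X] [CompleteSpace X]
    (f : X → EReal)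
    (hne_bot : ∀ x, f x ≠ ⊥) (hne_top : ∃ x, f x ≠ ⊤)
    (hminor : ∃ (xs : X →L[ℝ] ℝ) (b : ℝ), ∀ x, ((xs x + b : ℝ) : EReal) ≤ f x) :
    epigraph (biconjugateFn f) = closure (convexHull ℝ (epigraph f)) := by
  obtain ⟨hclosed, hconvex⟩ := epi_biconj_closed_convex f hne_bot hne_top
  apply Set.Subset.antisymm
  · -- hard direction: epi f** ⊆ cl conv epi f, by separation
    intro q hq
    by_contra hq'
    -- separate
    obtain ⟨φ, u, hqu, hS⟩ := geometric_hahn_banach_point_closed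
      ((convex_convexHull ℝ (epigraph f)).closure) isClosed_closure hq'
    set p : X →L[ℝ] ℝ := φ.comp (ContinuousLinearMap.inl ℝ X ℝ) with hp
    set α : ℝ := φ (0, 1) with hα
    have hφ : ∀ (x : X) (r : ℝ), φ (x, r) = p x + α * r := by
      intro x r
      have h : (x, r) = (x, (0 : ℝ)) + r • ((0 : X), (1 : ℝ)) := by
        simp [Prod.ext_iff]
      rw [h, map_add, map_smul]
      simp [hp, hα, smul_eq_mul]
      ring
    have hepi : ∀ z ∈ epigraph f, u < p z.1 + α * z.2 := by
      intro z hz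
      have := hS z (subset_closure (subset_convexHull ℝ _ hz))
      rwa [show z = (z.1, z.2) from rfl, hφ] at this
    -- a real point of f
    obtain ⟨x₁, hx₁⟩ := hne_top
    obtain ⟨v₁, hv₁⟩ : ∃ v : ℝ, f x₁ = (v : EReal) := by
      cases h : f x₁ with
      | bot => exact absurd h (hne_bot x₁)
      | top => exact absurd h hx₁
      | coe v => exact ⟨v, rfl⟩
    have hmem₁ : ∀ r : ℝ, v₁ ≤ r → (x₁, r) ∈ epigraph f := by
      intro r hr
      simp only [epigraph, mem_setOf_eq, hv₁]
      exact_mod_cast hr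
    -- α ≥ 0
    have hα0 : 0 ≤ α := by
      by_contra hneg
      push_neg at hneg
      set r : ℝ := max v₁ ((u - p x₁) / α) with hr
      have h1 := hepi (x₁, r) (hmem₁ r (le_max_left _ _))
      have h2 : α * r ≤ α * ((u - p x₁) / α) :=
        mul_le_mul_of_nonpos_left (le_max_right _ _) (le_of_lt hneg)
      rw [mul_div_cancel₀ _ (ne_of_lt hneg)] at h2
      simp only at h1
      linarith
    have hqlt : p q.1 + α * q.2 < u := by
      have := hqu
      rw [show q = (q.1, q.2) from rfl, hφ] at this
      exact this
    rcases eq_or_lt_of_le hα0 with hα0' | hαpos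
    · -- α = 0 case
      have hα0'' : α = 0 := hα0'.symm
      obtain ⟨xs, b, hmin⟩ := hminor
      have hpu : ∀ x : X, f x ≠ ⊤ → u < p x := by
        intro x hx
        obtain ⟨v, hv⟩ : ∃ v : ℝ, f x = (v : EReal) := by
          cases h : f x with
          | bot => exact absurd h (hne_bot x)
          | top => exact absurd h hx
          | coe v => exact ⟨v, rfl⟩
        have := hepi (x, v) (by simp [epigraph, hv])
        simpa [hα0''] using this
      have hq0 : p q.1 < u := by
        have := hqlt; rw [hα0''] at this; linarith
      set lam : ℝ := max 0 ((q.2 - xs q.1 - b + 1) / (u - p q.1)) with hlam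
      have hlam0 : 0 ≤ lam := le_max_left _ _
      have hlam1 : q.2 - xs q.1 - b + 1 ≤ lam * (u - p q.1) := by
        have hpos : 0 < u - p q.1 := by linarith
        have := le_max_right 0 ((q.2 - xs q.1 - b + 1) / (u - p q.1))
        calc q.2 - xs q.1 - b + 1
            = ((q.2 - xs q.1 - b + 1) / (u - p q.1)) * (u - p q.1) := by
              field_simp
          _ ≤ lam * (u - p q.1) := by
              apply mul_le_mul_of_nonneg_right this (le_of_lt hpos)
      set g : X →L[ℝ] ℝ := xs - lam • p with hg
      have hgapp : ∀ x, g x = xs x - lam * p x := by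
        intro x; simp [hg, smul_eq_mul]
      have hconj : conjugateFn f g ≤ ((-b - lam * u : ℝ) : EReal) := by
        refine iSup_le fun x => ?_
        cases hfx : f x with
        | bot => exact absurd hfx (hne_bot x)
        | top => rw [EReal.sub_top]; exact bot_le
        | coe v =>
          rw [← EReal.coe_sub, EReal.coe_le_coe_iff]
          have h1 : xs x + b ≤ v := by
            have := hmin x; rw [hfx] at this; exact_mod_cast this
          have h2 : u < p x := hpu x (by rw [hfx]; exact EReal.coe_ne_top v)
          have h3 : lam * u ≤ lam * p x :=
            mul_le_mul_of_nonneg_left (le_of_lt h2) hlam0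
          rw [hgapp]
          linarith
      have hfinal : (q.2 : EReal) < biconjugateFn f q.1 := by
        have hb1 : ((g q.1 : ℝ) : EReal) - ((-b - lam * u : ℝ) : EReal) ≤
            biconjugateFn f q.1 := by
          refine le_trans (EReal.sub_le_sub (le_refl _) hconj) ?_
          exact le_iSup (fun p' : X →L[ℝ] ℝ => (p' q.1 : EReal) - conjugateFn f p') g
        rw [← EReal.coe_sub] at hb1
        refine lt_of_lt_of_le ?_ hb1
        rw [EReal.coe_lt_coe_iff]
        rw [hgapp]
        linarith
      exact absurd hq (by simp [epigraph, not_le, hfinal])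
    · -- α > 0 case
      set g : X →L[ℝ] ℝ := (-(α⁻¹)) • p with hg
      have hgapp : ∀ x, g x = -(α⁻¹) * p x := by
        intro x; simp [hg, smul_eq_mul]
      have hαne : α ≠ 0 := ne_of_gt hαpos
      have hconj : conjugateFn f g ≤ ((-(u / α) : ℝ) : EReal) := by
        refine iSup_le fun x => ?_
        cases hfx : f x with
        | bot => exact absurd hfx (hne_bot x)
        | top => rw [EReal.sub_top]; exact bot_le
        | coe v =>
          rw [← EReal.coe_sub, EReal.coe_le_coe_iff]
          have h2 : u < p x + α * v := hepi (x, v) (by simp [epigraph, hfx])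
          have h3 : u / α ≤ α⁻¹ * p x + v := by
            rw [div_le_iff₀ hαpos, add_mul, mul_comm α⁻¹ (p x), mul_assoc,
              inv_mul_cancel₀ hαne, mul_one]
            linarith
          rw [hgapp]
          linarith
      have hfinal : (q.2 : EReal) < biconjugateFn f q.1 := by
        have hb1 : ((g q.1 : ℝ) : EReal) - ((-(u / α) : ℝ) : EReal) ≤
            biconjugateFn f q.1 := by
          refine le_trans (EReal.sub_le_sub (le_refl _) hconj) ?_
          exact le_iSup (fun p' : X →L[ℝ] ℝ => (p' q.1 : EReal) - conjugateFn f p') g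
        rw [← EReal.coe_sub] at hb1
        refine lt_of_lt_of_le ?_ hb1
        rw [EReal.coe_lt_coe_iff, hgapp]
        have h5 : q.2 < (u - p q.1) / α := by
          rw [lt_div_iff₀ hαpos]
          linarith [hqlt]
        have h6 : (u - p q.1) / α = -(α⁻¹) * p q.1 - -(u / α) := by
          field_simp
          ring
        linarith [h5, h6.le, h6.ge]
      exact absurd hq (by simp [epigraph, not_le, hfinal])
  · -- easy direction
    have hsub : epigraph f ⊆ epigraph (biconjugateFn f) := fun z hz =>
      le_trans (biconj_le f hne_bot hne_top z.1) hz
    exact closure_minimal (convexHull_min hsub hconvex) hclosed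
end

section
/- Let 𝒜 ⊆ ℓ∞, let g : 𝒜 → ℓ∞ be Uniformly Asymptotically Non-Anticipatory (UANA), let u ∈ 𝒜, and suppose there is M > 0 with ‖g(x^T(u,v))‖_∞ ≤ M for all T ∈ ℕ and all v ∈ B_T(u). Then for every λ ∈ ℓ¹, lim_{T→∞} sup_{v∈B_T(u)} |⟨λ, g(x^T(u,v))⟩ − ⟨λ, g(u)⟩| = 0; that is, for every ε > 0 there exists T̄ such that for all T ≥ T̄ and all v ∈ B_T(u), |⟨λ, g(x^T(u,v))⟩ − ⟨λ, g(u)⟩| ≤ ε. -/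
open scoped ENNReal

/-- The sequence `x^T(u,v)` equal to `u_t` for `t ≤ T` and to `v_t` for `t > T`,
as an element of `ℓ∞`. -/
noncomputable def splice (u v : lp (fun _ : ℕ => ℝ) ∞) (T : ℕ) : lp (fun _ : ℕ => ℝ) ∞ :=
  ⟨fun t => if t ≤ T then u t else v t, by
    apply memℓp_infty
    refine ⟨max ‖u‖ ‖v‖, ?_⟩
    rintro r ⟨t, rfl⟩
    dsimp only
    split_ifs
    · exact le_max_of_le_left (lp.norm_apply_le_norm ENNReal.top_ne_zero u t)
    · exact le_max_of_le_right (lp.norm_apply_le_norm ENNReal.top_ne_zero v t)⟩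

/-- Given `𝒜 ⊆ ℓ∞` and `u`, the set `B_T(u) = {v ∈ ℓ∞ : x^T(u,v) ∈ 𝒜}`. -/
def BT (A : Set (lp (fun _ : ℕ => ℝ) ∞)) (u : lp (fun _ : ℕ => ℝ) ∞) (T : ℕ) :
    Set (lp (fun _ : ℕ => ℝ) ∞) :=
  {v | splice u v T ∈ A}

/-- `g : 𝒜 → ℓ∞` is Uniformly Asymptotically Non-Anticipatory:
for every coordinate `t` and every `u ∈ 𝒜`,
`lim_{T→∞} sup_{v ∈ B_T(u)} |g_t(x^T(u,v)) − g_t(u)| = 0`. -/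
def UANA (A : Set (lp (fun _ : ℕ => ℝ) ∞))
    (g : lp (fun _ : ℕ => ℝ) ∞ → lp (fun _ : ℕ => ℝ) ∞) : Prop :=
  ∀ t : ℕ, ∀ u ∈ A, ∀ ε > (0 : ℝ), ∃ Tbar : ℕ, ∀ T ≥ Tbar, ∀ v ∈ BT A u T,
    |g (splice u v T) t - g u t| ≤ ε

/-! UANA says that each coordinate of `g(x^T(u,v))` tends to that of `g(u)` as `T → ∞`,
uniformly in `v ∈ B_T(u)`. The series `∑ λ_t g_t(x^T(u,v))` is dominated by `M ∑ |λ_t|`,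
so dominated convergence for series (Tannery's theorem) gives the claim. -/

open Filter Topology

local notation "ℓ∞" => lp (fun _ : ℕ => ℝ) ∞

/-- The filter along which `T → ∞` uniformly in `v ∈ B_T(u)`. -/
def spliceFilter (A : Set ℓ∞) (u : ℓ∞) : Filter (ℕ × ℓ∞) :=
  (atTop ×ˢ ⊤) ⊓ 𝓟 {p | p.2 ∈ BT A u p.1}

lemma eventually_spliceFilter_iff {A : Set ℓ∞} {u : ℓ∞} {P : ℕ × ℓ∞ → Prop} :
    (∀ᶠ p in spliceFilter A u, P p) ↔ ∃ Tbar : ℕ, ∀ T ≥ Tbar, ∀ v ∈ BT A u T, P (T, v) := by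
  simp only [spliceFilter, eventually_inf_principal, prod_top, eventually_comap,
    eventually_atTop, Prod.forall, Set.mem_ofPred_eq]
  refine exists_congr fun Tbar => forall₂_congr fun T _ => ?_
  exact ⟨fun h v => h T v rfl, fun h _ v hT => hT ▸ h v⟩

lemma tendsto_spliceFilter_iff {A : Set ℓ∞} {u : ℓ∞} {f : ℕ × ℓ∞ → ℝ} {a : ℝ} :
    Tendsto f (spliceFilter A u) (𝓝 a) ↔
      ∀ ε > 0, ∃ Tbar : ℕ, ∀ T ≥ Tbar, ∀ v ∈ BT A u T, |f (T, v) - a| ≤ ε := by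
  simp only [Metric.nhds_basis_closedBall.tendsto_right_iff, eventually_spliceFilter_iff,
    Metric.mem_closedBall, Real.dist_eq]

lemma UANA.tendsto_apply {A : Set ℓ∞} {g : ℓ∞ → ℓ∞} (hg : UANA A g) {u : ℓ∞} (hu : u ∈ A)
    (t : ℕ) : Tendsto (fun p => g (splice u p.2 p.1) t) (spliceFilter A u) (𝓝 (g u t)) :=
  tendsto_spliceFilter_iff.2 (hg t u hu)

lemma tendsto_tsum_mul_of_tendsto_apply {ι : Type*} {l : Filter ι} (lam : lp (fun _ : ℕ => ℝ) 1)
    {x : ι → ℓ∞} {y : ℕ → ℝ} {M : ℝ} (hx : ∀ t, Tendsto (fun i => x i t) l (𝓝 (y t)))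
    (hM : ∀ᶠ i in l, ‖x i‖ ≤ M) :
    Tendsto (fun i => ∑' t, lam t * x i t) l (𝓝 (∑' t, lam t * y t)) := by
  have hlam : Summable fun t => ‖lam t‖ := by
    simpa using (lp.memℓp lam).summable (by norm_num : 0 < (1 : ℝ≥0∞).toReal)
  refine tendsto_tsum_of_dominated_convergence (hlam.mul_right M)
    (fun t => (hx t).const_mul (lam t)) (hM.mono fun i hi t => ?_)
  rw [norm_mul]
  exact mul_le_mul_of_nonneg_left
    ((lp.norm_apply_le_norm ENNReal.top_ne_zero _ t).trans hi) (norm_nonneg _)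

theorem stmt6_general (A : Set (lp (fun _ : ℕ => ℝ) ∞))
    (g : lp (fun _ : ℕ => ℝ) ∞ → lp (fun _ : ℕ => ℝ) ∞)
    (hg : UANA A g)
    (u : lp (fun _ : ℕ => ℝ) ∞) (hu : u ∈ A)
    (M : ℝ)
    (hbdd : ∀ T : ℕ, ∀ v ∈ BT A u T, ‖g (splice u v T)‖ ≤ M)
    (lam : lp (fun _ : ℕ => ℝ) 1) :
    ∀ ε > (0 : ℝ), ∃ Tbar : ℕ, ∀ T ≥ Tbar, ∀ v ∈ BT A u T,
      |(∑' t, lam t * g (splice u v T) t) - ∑' t, lam t * g u t| ≤ ε := by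
  have hbound : ∀ᶠ p in spliceFilter A u, ‖g (splice u p.2 p.1)‖ ≤ M :=
    eventually_spliceFilter_iff.2 ⟨0, fun T _ => hbdd T⟩
  exact tendsto_spliceFilter_iff.1
    (tendsto_tsum_mul_of_tendsto_apply lam (hg.tendsto_apply hu) hbound)

/-- If `g : 𝒜 → ℓ∞` is UANA, `u ∈ 𝒜`, and `‖g(x^T(u,v))‖∞ ≤ M`
uniformly over `T ∈ ℕ` and `v ∈ B_T(u)`, then for every `λ ∈ ℓ¹`,
`lim_{T→∞} sup_{v ∈ B_T(u)} |⟨λ, g(x^T(u,v))⟩ − ⟨λ, g(u)⟩| = 0`, i.e. for every `ε > 0`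
there is `T̄` with `|⟨λ, g(x^T(u,v))⟩ − ⟨λ, g(u)⟩| ≤ ε` for all `T ≥ T̄`, `v ∈ B_T(u)`. -/
theorem stmt6 (A : Set (lp (fun _ : ℕ => ℝ) ∞))
    (g : lp (fun _ : ℕ => ℝ) ∞ → lp (fun _ : ℕ => ℝ) ∞)
    (hg : UANA A g)
    (u : lp (fun _ : ℕ => ℝ) ∞) (hu : u ∈ A)
    (M : ℝ) (hM : 0 < M)
    (hbdd : ∀ T : ℕ, ∀ v ∈ BT A u T, ‖g (splice u v T)‖ ≤ M)
    (lam : lp (fun _ : ℕ => ℝ) 1) :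
    ∀ ε > (0 : ℝ), ∃ Tbar : ℕ, ∀ T ≥ Tbar, ∀ v ∈ BT A u T,
      |(∑' t, lam t * g (splice u v T) t) - ∑' t, lam t * g u t| ≤ ε :=
  stmt6_general A g hg u hu M hbdd lam
end

section
/- Let f : ℓ∞ → ℝ be bounded below and satisfy lim_{T→∞} f(x^T(u,v)) = f(u) for all u, v ∈ ℓ∞. Let g : ℓ∞ → ℓ∞ be both Asymptotically Insensitive (AI) and Asymptotically Non-Anticipatory (ANA), suppose there exists u₀ ∈ ℓ∞ with limsup_{t→∞} g_t(u₀) ≤ 0, and suppose that for all u, v ∈ ℓ∞ the family {g(x^T(u,v)) : T ∈ ℕ} is uniformly bounded in ℓ∞. Then, with infima and suprema in the extended reals, sup_{Λ∈(ℓ∞)*₊} inf_{x∈ℓ∞} [f(x) + Λ(g(x))] = sup_{λ∈ℓ¹₊} inf_{x∈ℓ∞} [f(x) + ∑_t λ_t g_t(x)]. -/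
/-!
Every `λ ∈ ℓ¹₊` acts on `ℓ∞` as a positive functional, which gives one inequality. Conversely,
a positive functional `Λ` dominates, on sequences `z` with `limsup z ≤ 0`, its `ℓ¹` part
`λ_t = Λ(e_t)`: if `z_t ≤ ε` for `t ≥ N`, then `z ≤ ∑_{t<N} z_t e_t + ε·1` coordinatewise, so
`Λ z ≤ ∑_{t<N} λ_t z_t + ε Λ(1)`. By AI, `g(x^T(x,u₀))` inherits `limsup ≤ 0` from `g(u₀)`, hence
`f(x^T) + Λ(g(x^T)) ≤ f(x^T) + ⟨λ, g(x^T)⟩`, and the right side tends to `f(x) + ⟨λ, g(x)⟩` as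
`T → ∞` by the hypothesis on `f`, ANA and dominated convergence.
-/

open scoped ENNReal
open Filter

/-- `g : ℓ∞ → ℓ∞` is Asymptotically Insensitive:
`lim_{t→∞} [g_t(x^T(u,v)) − g_t(v)] = 0` for all `u, v ∈ ℓ∞` and `T ∈ ℕ`. -/
def AI (g : lp (fun _ : ℕ => ℝ) ∞ → lp (fun _ : ℕ => ℝ) ∞) : Prop :=
  ∀ u v : lp (fun _ : ℕ => ℝ) ∞, ∀ T : ℕ,
    Tendsto (fun t : ℕ => g (splice u v T) t - g v t) atTop (nhds 0)

/-- `g : ℓ∞ → ℓ∞` is Asymptotically Non-Anticipatory: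
`lim_{T→∞} [g_t(x^T(u,v)) − g_t(u)] = 0` for all `u, v ∈ ℓ∞` and `t ∈ ℕ`. -/
def ANA (g : lp (fun _ : ℕ => ℝ) ∞ → lp (fun _ : ℕ => ℝ) ∞) : Prop :=
  ∀ u v : lp (fun _ : ℕ => ℝ) ∞, ∀ t : ℕ,
    Tendsto (fun T : ℕ => g (splice u v T) t - g u t) atTop (nhds 0)

open Topology Finset

local notation "ℓ∞" => lp (fun _ : ℕ => ℝ) ∞

namespace lp

variable {ι : Type*}

lemma summable_norm_of_one (lam : lp (fun _ : ι => ℝ) 1) : Summable fun t => ‖lam t‖ := by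
  simpa using (lp.memℓp lam).summable (by norm_num)

lemma norm_mul_le_norm_mul_norm (lam : lp (fun _ : ι => ℝ) 1) (y : lp (fun _ : ι => ℝ) ∞)
    (t : ι) : ‖lam t * y t‖ ≤ ‖lam t‖ * ‖y‖ := by
  rw [norm_mul]
  exact mul_le_mul_of_nonneg_left (lp.norm_apply_le_norm ENNReal.top_ne_zero y t) (norm_nonneg _)

lemma summable_norm_mul (lam : lp (fun _ : ι => ℝ) 1) (y : lp (fun _ : ι => ℝ) ∞) :
    Summable fun t => ‖lam t * y t‖ :=
  .of_nonneg_of_le (fun _ => norm_nonneg _) (norm_mul_le_norm_mul_norm lam y)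
    ((summable_norm_of_one lam).mul_right _)

lemma tendsto_tsum_mul {α : Type*} {l : Filter α} (lam : lp (fun _ : ι => ℝ) 1)
    {y : α → lp (fun _ : ι => ℝ) ∞} {z : lp (fun _ : ι => ℝ) ∞} {C : ℝ} (hC : ∀ a, ‖y a‖ ≤ C)
    (hyz : ∀ t, Tendsto (fun a => y a t) l (𝓝 (z t))) :
    Tendsto (fun a => ∑' t, lam t * y a t) l (𝓝 (∑' t, lam t * z t)) :=
  tendsto_tsum_of_dominated_convergence ((summable_norm_of_one lam).mul_right C)
    (fun t => (hyz t).const_mul (lam t))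
    (Eventually.of_forall fun a t => (norm_mul_le_norm_mul_norm lam (y a) t).trans
      (mul_le_mul_of_nonneg_left (hC a) (norm_nonneg _)))

noncomputable def pairing (lam : lp (fun _ : ι => ℝ) 1) : lp (fun _ : ι => ℝ) ∞ →L[ℝ] ℝ :=
  LinearMap.mkContinuous
    { toFun := fun y => ∑' t, lam t * y t
      map_add' := fun y z => by
        simp only [lp.coeFn_add, Pi.add_apply, mul_add]
        exact (summable_norm_mul lam y).of_norm.tsum_add (summable_norm_mul lam z).of_norm
      map_smul' := fun c y => by
        simp only [lp.coeFn_smul, Pi.smul_apply, smul_eq_mul, RingHom.id_apply, mul_left_comm,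
          tsum_mul_left] }
    (∑' t, ‖lam t‖) fun y =>
      calc ‖∑' t, lam t * y t‖ ≤ ∑' t, ‖lam t * y t‖ :=
            norm_tsum_le_tsum_norm (summable_norm_mul lam y)
        _ ≤ ∑' t, ‖lam t‖ * ‖y‖ := (summable_norm_mul lam y).tsum_le_tsum
            (norm_mul_le_norm_mul_norm lam y) ((summable_norm_of_one lam).mul_right _)
        _ = (∑' t, ‖lam t‖) * ‖y‖ := tsum_mul_right

lemma sum_single_apply [DecidableEq ι] (z : lp (fun _ : ι => ℝ) ∞) (s : Finset ι) (i : ι) :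
    (∑ t ∈ s, lp.single ∞ t (z t)) i = if i ∈ s then z i else 0 := by
  rw [lp.coeFn_sum, Finset.sum_apply]
  simp [Pi.single_apply]

end lp

def IsPositiveFunctional (Λ : ℓ∞ →L[ℝ] ℝ) : Prop :=
  ∀ y : ℓ∞, (∀ t, 0 ≤ y t) → 0 ≤ Λ y

namespace IsPositiveFunctional

variable {Λ : ℓ∞ →L[ℝ] ℝ}

lemma mono (hΛ : IsPositiveFunctional Λ) {y w : ℓ∞} (h : ∀ t, y t ≤ w t) : Λ y ≤ Λ w := by
  have := hΛ (w - y) fun t => by simpa using h t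
  rwa [map_sub, sub_nonneg] at this

lemma apply_single_nonneg (hΛ : IsPositiveFunctional Λ) (t : ℕ) : 0 ≤ Λ (lp.single ∞ t 1) :=
  hΛ _ fun s => by simp [Pi.single_apply]; split_ifs <;> norm_num

lemma apply_sum_single (z : ℓ∞) (s : Finset ℕ) :
    Λ (∑ t ∈ s, lp.single ∞ t (z t)) = ∑ t ∈ s, Λ (lp.single ∞ t 1) * z t := by
  simp only [map_sum]
  refine Finset.sum_congr rfl fun t _ => ?_
  have h : (lp.single ∞ t (z t) : ℓ∞) = z t • (lp.single ∞ t 1 : ℓ∞) := by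
    rw [← lp.single_smul, smul_eq_mul, mul_one]
  rw [h, map_smul, smul_eq_mul, mul_comm]

lemma summable_apply_single (hΛ : IsPositiveFunctional Λ) :
    Summable fun t => Λ (lp.single ∞ t 1) := by
  refine summable_of_sum_range_le hΛ.apply_single_nonneg (c := Λ 1) fun n => ?_
  have h := hΛ.mono (y := ∑ t ∈ range n, lp.single ∞ t ((1 : ℓ∞) t)) (w := 1) fun s => by
    rw [lp.sum_single_apply]; split_ifs <;> simp [lp.infty_coeFn_one]
  simpa [apply_sum_single, lp.infty_coeFn_one] using h

/-- The countably additive part of `Λ` in its Yosida–Hewitt decomposition. -/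
noncomputable def l1Part (hΛ : IsPositiveFunctional Λ) : lp (fun _ : ℕ => ℝ) 1 :=
  ⟨fun t => Λ (lp.single ∞ t 1), memℓp_gen <| by
    simpa [Real.norm_of_nonneg (hΛ.apply_single_nonneg _)] using hΛ.summable_apply_single⟩

lemma apply_le_sum_range_add (hΛ : IsPositiveFunctional Λ) {z : ℓ∞} {N : ℕ} {ε : ℝ} (hε : 0 ≤ ε)
    (hz : ∀ t, N ≤ t → z t ≤ ε) :
    Λ z ≤ ∑ t ∈ range N, Λ (lp.single ∞ t 1) * z t + ε * Λ 1 := by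
  have h := hΛ.mono (y := z) (w := ∑ t ∈ range N, lp.single ∞ t (z t) + ε • 1) fun s => by
    rw [lp.coeFn_add, Pi.add_apply, lp.sum_single_apply, lp.coeFn_smul, lp.infty_coeFn_one]
    split_ifs with hs
    · simpa using hε
    · simpa using hz s (by simpa using hs)
  rwa [map_add, apply_sum_single, map_smul, smul_eq_mul] at h

lemma apply_le_tsum (hΛ : IsPositiveFunctional Λ) {z : ℓ∞}
    (hz : ∀ ε > 0, ∀ᶠ t in atTop, z t ≤ ε) : Λ z ≤ ∑' t, hΛ.l1Part t * z t := by
  have hsum : Summable fun t => hΛ.l1Part t * z t := (lp.summable_norm_mul _ z).of_norm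
  have hε : ∀ ε > 0, Λ z ≤ ∑' t, hΛ.l1Part t * z t + ε * Λ 1 := fun ε hε => by
    obtain ⟨N₀, hN₀⟩ := eventually_atTop.1 (hz ε hε)
    refine ge_of_tendsto (hsum.hasSum.tendsto_sum_nat.add_const _) ?_
    filter_upwards [eventually_ge_atTop N₀] with N hN
    exact hΛ.apply_le_sum_range_add hε.le fun t ht => hN₀ t (hN.trans ht)
  have hlim : Tendsto (fun ε => ∑' t, hΛ.l1Part t * z t + ε * Λ 1) (𝓝[>] 0)
      (𝓝 (∑' t, hΛ.l1Part t * z t)) := by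
    refine ((continuous_const.add (continuous_id.mul continuous_const)).tendsto' _ _ ?_).mono_left
      nhdsWithin_le_nhds
    simp
  exact ge_of_tendsto hlim (eventually_nhdsWithin_of_forall hε)

end IsPositiveFunctional

lemma AI.eventually_splice_le {g : ℓ∞ → ℓ∞} (hAI : AI g) {u₀ : ℓ∞}
    (hu₀ : limsup (fun t : ℕ => g u₀ t) atTop ≤ 0) (x : ℓ∞) (T : ℕ) :
    ∀ ε > 0, ∀ᶠ t in atTop, g (splice x u₀ T) t ≤ ε := fun ε hε => by
  have hbdd : IsBoundedUnder (· ≤ ·) atTop fun t => g u₀ t := isBoundedUnder_of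
    ⟨‖g u₀‖, fun t => (Real.le_norm_self _).trans (lp.norm_apply_le_norm ENNReal.top_ne_zero _ t)⟩
  filter_upwards [eventually_lt_of_limsup_lt (hu₀.trans_lt (half_pos hε)) hbdd,
    (hAI x u₀ T).eventually (gt_mem_nhds (half_pos hε))] with t h₁ h₂
  linarith

theorem stmt7_general (f : lp (fun _ : ℕ => ℝ) ∞ → ℝ)
    (hf : ∀ u v : lp (fun _ : ℕ => ℝ) ∞,
      Tendsto (fun T : ℕ => f (splice u v T)) atTop (nhds (f u)))
    (g : lp (fun _ : ℕ => ℝ) ∞ → lp (fun _ : ℕ => ℝ) ∞)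
    (hAI : AI g) (hANA : ANA g)
    (u₀ : lp (fun _ : ℕ => ℝ) ∞) (hu₀ : Filter.limsup (fun t : ℕ => g u₀ t) atTop ≤ 0)
    (hbdd : ∀ u v : lp (fun _ : ℕ => ℝ) ∞, ∃ C : ℝ, ∀ T : ℕ, ‖g (splice u v T)‖ ≤ C) :
    (⨆ (Λ : lp (fun _ : ℕ => ℝ) ∞ →L[ℝ] ℝ)
        (_ : ∀ y : lp (fun _ : ℕ => ℝ) ∞, (∀ t, 0 ≤ y t) → 0 ≤ Λ y),
        ⨅ x : lp (fun _ : ℕ => ℝ) ∞, ((f x + Λ (g x) : ℝ) : EReal))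
      = ⨆ (lam : lp (fun _ : ℕ => ℝ) 1) (_ : ∀ t, 0 ≤ lam t),
        ⨅ x : lp (fun _ : ℕ => ℝ) ∞, ((f x + ∑' t, lam t * g x t : ℝ) : EReal) := by
  apply le_antisymm
  · refine iSup₂_le fun Λ (hΛ : IsPositiveFunctional Λ) => ?_
    refine le_iSup₂_of_le hΛ.l1Part hΛ.apply_single_nonneg (le_iInf fun x => ?_)
    obtain ⟨C, hC⟩ := hbdd x u₀
    have hlim : Tendsto (fun T => f (splice x u₀ T) + ∑' t, hΛ.l1Part t * g (splice x u₀ T) t)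
        atTop (𝓝 (f x + ∑' t, hΛ.l1Part t * g x t)) :=
      (hf x u₀).add (lp.tendsto_tsum_mul _ hC fun t => tendsto_sub_nhds_zero_iff.1 (hANA x u₀ t))
    refine ge_of_tendsto (EReal.tendsto_coe.2 hlim) (Eventually.of_forall fun T => ?_)
    refine iInf_le_of_le (splice x u₀ T) (EReal.coe_le_coe_iff.2 ?_)
    exact (add_le_add_iff_left _).2 (hΛ.apply_le_tsum (hAI.eventually_splice_le hu₀ x T))
  · refine iSup₂_le fun lam hlam => le_iSup₂_of_le (lp.pairing lam)
      (fun y hy => tsum_nonneg fun t => mul_nonneg (hlam t) (hy t)) le_rfl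

/-- Under the stated asymptotic conditions on `f : ℓ∞ → ℝ` (bounded
below) and `g : ℓ∞ → ℓ∞` (AI and ANA, with a point `u₀` whose constraint values have
nonpositive limsup and uniform boundedness along splices), the dual value over the full
continuous dual `(ℓ∞)*₊` equals the dual value over `ℓ¹₊`:
`sup_{Λ∈(ℓ∞)*₊} inf_x [f(x) + Λ(g(x))] = sup_{λ∈ℓ¹₊} inf_x [f(x) + ∑_t λ_t g_t(x)]`. -/
theorem stmt7 (f : lp (fun _ : ℕ => ℝ) ∞ → ℝ)
    (M : ℝ) (hfbdd : ∀ x, M ≤ f x)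
    (hf : ∀ u v : lp (fun _ : ℕ => ℝ) ∞,
      Tendsto (fun T : ℕ => f (splice u v T)) atTop (nhds (f u)))
    (g : lp (fun _ : ℕ => ℝ) ∞ → lp (fun _ : ℕ => ℝ) ∞)
    (hAI : AI g) (hANA : ANA g)
    (u₀ : lp (fun _ : ℕ => ℝ) ∞) (hu₀ : Filter.limsup (fun t : ℕ => g u₀ t) atTop ≤ 0)
    (hbdd : ∀ u v : lp (fun _ : ℕ => ℝ) ∞, ∃ C : ℝ, ∀ T : ℕ, ‖g (splice u v T)‖ ≤ C) :
    (⨆ (Λ : lp (fun _ : ℕ => ℝ) ∞ →L[ℝ] ℝ)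
        (_ : ∀ y : lp (fun _ : ℕ => ℝ) ∞, (∀ t, 0 ≤ y t) → 0 ≤ Λ y),
        ⨅ x : lp (fun _ : ℕ => ℝ) ∞, ((f x + Λ (g x) : ℝ) : EReal))
      = ⨆ (lam : lp (fun _ : ℕ => ℝ) 1) (_ : ∀ t, 0 ≤ lam t),
        ⨅ x : lp (fun _ : ℕ => ℝ) ∞, ((f x + ∑' t, lam t * g x t : ℝ) : EReal) :=
  stmt7_general f hf g hAI hANA u₀ hu₀ hbdd
end

section
/- Fix an integer S ≥ 1, β > 0, probabilities p_1, …, p_S > 0 with ∑_{s=1}^S p_s = 1, real numbers g_0, …, g_S, b_{-1} ∈ ℝ, b > 0, and labor supplies ℓ_0, …, ℓ_S ∈ [0,1). Then the following are equivalent: (1) there exist c_0, …, c_S > 0, τ_0, …, τ_S ∈ ℝ and q ∈ ℝ such that c_0 = b_{-1} + (1−τ_0)ℓ_0 − q·b; c_s = b + (1−τ_s)ℓ_s for s = 1, …, S; (1−τ_s)/c_s = 1/(2√(1−ℓ_s)) for s = 0, …, S; q/c_0 = β·∑_{s=1}^S p_s/c_s; q·b = b_{-1} − τ_0ℓ_0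 + g_0; and b = τ_sℓ_s − g_s for s = 1, …, S. (2) ℓ_s > g_s for all s = 0, …, S, b = f(ℓ_s; g_s) for s = 1, …, S, and b_{-1} = f(ℓ_0; g_0) + (ℓ_0 − g_0)·β·∑_{s=1}^S p_s·h(ℓ_s). -/
/-- `h(ℓ) = 1 − ℓ/(2√(1−ℓ))`. -/
noncomputable def hfun (l : ℝ) : ℝ := 1 - l / (2 * Real.sqrt (1 - l))

/-- `f(ℓ; g) = (ℓ − g)·h(ℓ)`, the government net surplus function. -/
noncomputable def ffun (l g : ℝ) : ℝ := (l - g) * hfun l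

/-!
Adding the household and government budget constraints of a period shows that consumption
equals `ℓ − g` in that period, and the intratemporal first-order condition then pins the tax
rate down to `τ = 1 − (ℓ − g)/(2√(1−ℓ))`. With these values the government constraint of
state `s` reads `b = τ ℓ − g = f(ℓ; g)`, so `b / c_s = h(ℓ_s)`; the Euler equation turns
`q b` into `(ℓ₀ − g₀) β ∑ p_s h(ℓ_s)`, and the period-0 government constraint becomes the
formula for `b₋₁`. Conversely these values solve the system whenever `ℓ_s > g_s`.
-/

noncomputable def focTax (l c : ℝ) : ℝ := 1 - c / (2 * Real.sqrt (1 - l))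

lemma foc_iff_eq_focTax {l c τ : ℝ} (hl : l < 1) (hc : c ≠ 0) :
    (1 - τ) / c = 1 / (2 * Real.sqrt (1 - l)) ↔ τ = focTax l c := by
  have hsqrt : 0 < Real.sqrt (1 - l) := Real.sqrt_pos.mpr (by linarith)
  unfold focTax
  constructor
  · intro h
    field_simp at h ⊢
    linarith
  · rintro rfl
    field_simp
    ring

lemma focTax_mul_sub (l g : ℝ) : focTax l (l - g) * l - g = ffun l g := by
  unfold focTax ffun hfun
  ring

lemma div_sub_mul_ffun {l g : ℝ} (p : ℝ) (hgl : g < l) : p / (l - g) * ffun l g = p * hfun l := by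
  have : l - g ≠ 0 := sub_ne_zero.mpr hgl.ne'
  unfold ffun
  field_simp

lemma sum_div_sub_mul_eq_sum_mul_hfun {ι : Type*} [Fintype ι] {p l g : ι → ℝ} {b : ℝ}
    (hgl : ∀ s, g s < l s) (hb : ∀ s, b = ffun (l s) (g s)) :
    (∑ s, p s / (l s - g s)) * b = ∑ s, p s * hfun (l s) := by
  rw [Finset.sum_mul]
  refine Finset.sum_congr rfl fun s _ => ?_
  rw [hb s, div_sub_mul_ffun _ (hgl s)]

theorem stmt9_general (S : ℕ) (β : ℝ)
    (p : Fin S → ℝ)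
    (g0 : ℝ) (g : Fin S → ℝ) (bm1 : ℝ) (b : ℝ)
    (l0 : ℝ) (hl0 : l0 ∈ Set.Ico (0 : ℝ) 1)
    (l : Fin S → ℝ) (hl : ∀ s, l s ∈ Set.Ico (0 : ℝ) 1) :
    (∃ (c0 : ℝ) (c : Fin S → ℝ) (τ0 : ℝ) (τ : Fin S → ℝ) (q : ℝ),
      0 < c0 ∧ (∀ s, 0 < c s) ∧
      c0 = bm1 + (1 - τ0) * l0 - q * b ∧
      (∀ s, c s = b + (1 - τ s) * l s) ∧
      (1 - τ0) / c0 = 1 / (2 * Real.sqrt (1 - l0)) ∧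
      (∀ s, (1 - τ s) / c s = 1 / (2 * Real.sqrt (1 - l s))) ∧
      q / c0 = β * ∑ s, p s / c s ∧
      q * b = bm1 - τ0 * l0 + g0 ∧
      (∀ s, b = τ s * l s - g s))
    ↔ (g0 < l0 ∧ (∀ s, g s < l s) ∧ (∀ s, b = ffun (l s) (g s)) ∧
        bm1 = ffun l0 g0 + (l0 - g0) * (β * ∑ s, p s * hfun (l s))) := by
  constructor
  · rintro ⟨c0, c, τ0, τ, q, hc0, hc, hbud0, hbud, hfoc0, hfoc, heuler, hgov0, hgov⟩
    have hc0_eq : c0 = l0 - g0 := by linear_combination hbud0 - hgov0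
    have hc_eq : c = fun s => l s - g s := funext fun s => by linear_combination hbud s + hgov s
    subst hc0_eq hc_eq
    have hgl : ∀ s, g s < l s := fun s => sub_pos.mp (hc s)
    have hτ0 := (foc_iff_eq_focTax hl0.2 hc0.ne').mp hfoc0
    have hbf : ∀ s, b = ffun (l s) (g s) := fun s => by
      rw [hgov s, (foc_iff_eq_focTax (hl s).2 (hc s).ne').mp (hfoc s), focTax_mul_sub]
    have hq : q = (l0 - g0) * (β * ∑ s, p s / (l s - g s)) := by
      rw [← heuler, mul_div_cancel₀ _ hc0.ne']
    refine ⟨sub_pos.mp hc0, hgl, hbf, ?_⟩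
    rw [← focTax_mul_sub, ← hτ0, ← sum_div_sub_mul_eq_sum_mul_hfun hgl hbf]
    linear_combination -hgov0 + b * hq
  · rintro ⟨hgl0, hgl, hbf, hbm1⟩
    set q := (l0 - g0) * (β * ∑ s, p s / (l s - g s))
    have hqb : q * b = bm1 - focTax l0 (l0 - g0) * l0 + g0 := by
      rw [hbm1, ← focTax_mul_sub, ← sum_div_sub_mul_eq_sum_mul_hfun hgl hbf]
      ring
    have hgov : ∀ s, b = focTax (l s) (l s - g s) * l s - g s := fun s => by
      rw [focTax_mul_sub, hbf s]
    refine ⟨l0 - g0, fun s => l s - g s, focTax l0 (l0 - g0),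
      fun s => focTax (l s) (l s - g s), q, sub_pos.mpr hgl0, fun s => sub_pos.mpr (hgl s),
      by linear_combination hqb, fun s => by linear_combination -hgov s,
      (foc_iff_eq_focTax hl0.2 (sub_pos.mpr hgl0).ne').mpr rfl,
      fun s => (foc_iff_eq_focTax (hl s).2 (sub_pos.mpr (hgl s)).ne').mpr rfl,
      mul_div_cancel_left₀ _ (sub_pos.mpr hgl0).ne', hqb, hgov⟩

/-- **simplification of the Ramsey constraints.** For `S ≥ 1` states with
probabilities `p_s > 0` summing to one, `b > 0` and labor supplies in `[0,1)`, the system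
consisting of the household budget constraints, intratemporal first-order conditions,
Euler equation and government budget constraints (with `u(c) = log c`,
`v(ℓ) = √(1−ℓ)`) has a solution `(c, τ, q)` with `c > 0` if and only if
`ℓ_s > g_s` for all `s`, `b = f(ℓ_s; g_s)` for `s = 1,…,S`, and
`b₋₁ = f(ℓ₀; g₀) + (ℓ₀ − g₀)·β·∑_s p_s·h(ℓ_s)`. -/
theorem stmt9 (S : ℕ) (hS : 1 ≤ S) (β : ℝ) (hβ : 0 < β)
    (p : Fin S → ℝ) (hp : ∀ s, 0 < p s) (hpsum : ∑ s, p s = 1)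
    (g0 : ℝ) (g : Fin S → ℝ) (bm1 : ℝ) (b : ℝ) (hb : 0 < b)
    (l0 : ℝ) (hl0 : l0 ∈ Set.Ico (0 : ℝ) 1)
    (l : Fin S → ℝ) (hl : ∀ s, l s ∈ Set.Ico (0 : ℝ) 1) :
    (∃ (c0 : ℝ) (c : Fin S → ℝ) (τ0 : ℝ) (τ : Fin S → ℝ) (q : ℝ),
      0 < c0 ∧ (∀ s, 0 < c s) ∧
      c0 = bm1 + (1 - τ0) * l0 - q * b ∧
      (∀ s, c s = b + (1 - τ s) * l s) ∧
      (1 - τ0) / c0 = 1 / (2 * Real.sqrt (1 - l0)) ∧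
      (∀ s, (1 - τ s) / c s = 1 / (2 * Real.sqrt (1 - l s))) ∧
      q / c0 = β * ∑ s, p s / c s ∧
      q * b = bm1 - τ0 * l0 + g0 ∧
      (∀ s, b = τ s * l s - g s))
    ↔ (g0 < l0 ∧ (∀ s, g s < l s) ∧ (∀ s, b = ffun (l s) (g s)) ∧
        bm1 = ffun l0 g0 + (l0 - g0) * (β * ∑ s, p s * hfun (l s))) :=
  stmt9_general S β p g0 g bm1 b l0 hl0 l hl
end

section
/- Fix β ∈ (0,1) and let W(γ) := (γ²/4 + max(1 − γ, 0))/(1 − β) for γ ≥ 0. Then inf_{γ≥0} sup_{c∈[0,∞), l∈[0,1]} [(l − c) + γ(√c − √l) + β·W(γ)] = 1/(4(1 − β)); moreover the infimum is attained at γ = 1, and at γ = 1 the inner supremum is attained both at (c, l) = (1/4, 0) and at (c, l) = (1/4, 1). -/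
/-- `W(γ) = (γ²/4 + max(1 − γ, 0))/(1 − β)`, the solution of the auxiliary
functional equation in the σ = 1/2 principal–agent example. -/
noncomputable def Wfun (β γ : ℝ) : ℝ := (γ ^ 2 / 4 + max (1 - γ) 0) / (1 - β)

/-- The inner expression `(l − c) + γ(√c − √l) + β·W(γ)`. -/
noncomputable def Efun (β γ c l : ℝ) : ℝ :=
  (l - c) + γ * (Real.sqrt c - Real.sqrt l) + β * Wfun β γ

/-- The inner supremum `Φ(γ) = sup_{c ≥ 0, l ∈ [0,1]} E(γ, c, l)`. -/
noncomputable def Phi (β γ : ℝ) : ℝ :=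
  sSup {z : ℝ | ∃ c l : ℝ, 0 ≤ c ∧ 0 ≤ l ∧ l ≤ 1 ∧ z = Efun β γ c l}

/-!
The inner problem separates: `E = (γ√c − c) + (l − γ√l) + βW(γ)`. The first summand is a
concave quadratic in `√c` with maximum `γ²/4` at `c = γ²/4`; the second is convex in `√l ∈ [0, 1]`,
so its maximum `max(1 − γ, 0)` sits at an endpoint. Hence `Φ(γ) = (1 − β)W(γ) + βW(γ) = W(γ)`,
and `γ²/4 + max(1 − γ, 0) ≥ 1/4` with equality at `γ = 1`, where both endpoints `l = 0, 1` are optimal.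
-/

open Real

lemma mul_sqrt_sub_le_sq_div_four (γ : ℝ) {c : ℝ} (hc : 0 ≤ c) : γ * √c - c ≤ γ ^ 2 / 4 := by
  nlinarith [sq_sqrt hc, sq_nonneg (√c - γ / 2)]

lemma mul_sqrt_sq_div_four_sub {γ : ℝ} (hγ : 0 ≤ γ) : γ * √(γ ^ 2 / 4) - γ ^ 2 / 4 = γ ^ 2 / 4 := by
  rw [show γ ^ 2 / 4 = (γ / 2) ^ 2 by ring, sqrt_sq (by positivity)]
  ring

lemma sub_mul_sqrt_le_max (γ : ℝ) {l : ℝ} (hl0 : 0 ≤ l) (hl1 : l ≤ 1) :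
    l - γ * √l ≤ max (1 - γ) 0 := by
  have hsqrt_le_one : √l ≤ 1 := sqrt_le_one.mpr hl1
  have hl_le_sqrt : l ≤ √l := by
    nlinarith [sq_sqrt hl0, mul_nonneg (sqrt_nonneg l) (sub_nonneg.mpr hsqrt_le_one)]
  have hle_linear : l - γ * √l ≤ √l * (1 - γ) := by linarith
  rcases le_total γ 1 with h | h
  · exact le_max_of_le_left (by nlinarith)
  · exact le_max_of_le_right (by nlinarith [sqrt_nonneg l])

lemma sq_div_four_add_max_add_mul_Wfun {β : ℝ} (hβ : β ≠ 1) (γ : ℝ) :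
    γ ^ 2 / 4 + max (1 - γ) 0 + β * Wfun β γ = Wfun β γ := by
  have : 1 - β ≠ 0 := sub_ne_zero.mpr hβ.symm
  unfold Wfun
  field_simp
  ring

lemma Efun_sq_div_four_eq_Wfun {β γ l : ℝ} (hβ : β ≠ 1) (hγ : 0 ≤ γ)
    (hl : l - γ * √l = max (1 - γ) 0) : Efun β γ (γ ^ 2 / 4) l = Wfun β γ := by
  rw [Efun]
  linarith [sq_div_four_add_max_add_mul_Wfun hβ γ, mul_sqrt_sq_div_four_sub hγ]

lemma isGreatest_Efun {β γ : ℝ} (hβ : β ≠ 1) (hγ : 0 ≤ γ) :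
    IsGreatest {z : ℝ | ∃ c l : ℝ, 0 ≤ c ∧ 0 ≤ l ∧ l ≤ 1 ∧ z = Efun β γ c l} (Wfun β γ) := by
  constructor
  · rcases le_total γ 1 with h | h
    · refine ⟨γ ^ 2 / 4, 1, by positivity, zero_le_one, le_rfl, ?_⟩
      refine (Efun_sq_div_four_eq_Wfun hβ hγ ?_).symm
      rw [sqrt_one, max_eq_left (by linarith)]
      ring
    · refine ⟨γ ^ 2 / 4, 0, by positivity, le_rfl, zero_le_one, ?_⟩
      refine (Efun_sq_div_four_eq_Wfun hβ hγ ?_).symm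
      rw [sqrt_zero, max_eq_right (by linarith)]
      ring
  · rintro z ⟨c, l, hc, hl0, hl1, rfl⟩
    rw [← sq_div_four_add_max_add_mul_Wfun hβ γ, Efun]
    linarith [mul_sqrt_sub_le_sq_div_four γ hc, sub_mul_sqrt_le_max γ hl0 hl1]

lemma Phi_eq_Wfun {β γ : ℝ} (hβ : β ≠ 1) (hγ : 0 ≤ γ) : Phi β γ = Wfun β γ :=
  (isGreatest_Efun hβ hγ).csSup_eq

lemma one_div_four_le_sq_div_four_add_max (γ : ℝ) : 1 / 4 ≤ γ ^ 2 / 4 + max (1 - γ) 0 := by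
  rcases le_total γ 1 with h | h
  · nlinarith [le_max_left (1 - γ) 0]
  · nlinarith [le_max_right (1 - γ) 0]

lemma Wfun_one (β : ℝ) : Wfun β 1 = 1 / (4 * (1 - β)) := by
  rw [Wfun, sub_self, max_self, mul_comm, ← div_div]
  norm_num [div_right_comm]

lemma Wfun_one_le {β : ℝ} (hβ : β < 1) (γ : ℝ) : Wfun β 1 ≤ Wfun β γ := by
  have h : 1 ^ 2 / 4 + max (1 - 1) 0 ≤ γ ^ 2 / 4 + max (1 - γ) 0 := by
    simpa using one_div_four_le_sq_div_four_add_max γ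
  exact div_le_div_of_nonneg_right h (sub_nonneg.mpr hβ.le)

theorem stmt11_general (β : ℝ) (hβ1 : β < 1) :
    IsLeast {z : ℝ | ∃ γ : ℝ, 0 ≤ γ ∧ z = Phi β γ} (1 / (4 * (1 - β)))
    ∧ Phi β 1 = 1 / (4 * (1 - β))
    ∧ Efun β 1 (1 / 4) 0 = Phi β 1
    ∧ Efun β 1 (1 / 4) 1 = Phi β 1 := by
  have hβ : β ≠ 1 := hβ1.ne
  have hPhi_one : Phi β 1 = Wfun β 1 := Phi_eq_Wfun hβ zero_le_one
  have hEfun_one (l : ℝ) (hl : l - √l = 0) : Efun β 1 (1 / 4) l = Phi β 1 := by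
    rw [hPhi_one, ← Efun_sq_div_four_eq_Wfun hβ zero_le_one (by simpa using hl)]
    norm_num
  refine ⟨⟨⟨1, zero_le_one, by rw [hPhi_one, Wfun_one]⟩, ?_⟩, hPhi_one.trans (Wfun_one β),
    hEfun_one 0 (by simp), hEfun_one 1 (by simp)⟩
  rintro z ⟨γ, hγ, rfl⟩
  rw [Phi_eq_Wfun hβ hγ, ← Wfun_one]
  exact Wfun_one_le hβ1 γ

/-- **value of the inf-sup functional equation, σ = 1/2.**
For `β ∈ (0,1)`, `inf_{γ≥0} Φ(γ) = 1/(4(1 − β))`, the infimum being attained at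
`γ = 1` (so `1/(4(1−β))` is the least element of the value set), and at `γ = 1` the inner
supremum is attained both at `(c,l) = (1/4, 0)` and at `(c,l) = (1/4, 1)`. -/
theorem stmt11 (β : ℝ) (hβ0 : 0 < β) (hβ1 : β < 1) :
    IsLeast {z : ℝ | ∃ γ : ℝ, 0 ≤ γ ∧ z = Phi β γ} (1 / (4 * (1 - β)))
    ∧ Phi β 1 = 1 / (4 * (1 - β))
    ∧ Efun β 1 (1 / 4) 0 = Phi β 1
    ∧ Efun β 1 (1 / 4) 1 = Phi β 1 :=
  stmt11_general β hβ1
end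

section
/- Fix β ∈ (0,1/2) and let W(γ) := (γ²/4 + max(1 − γ, 0))/(1 − β) for γ ≥ 0. Then sup_{c∈[0,∞), l∈[0,1]} inf_{γ≥0} [(l − c) + γ(√c − √l) + β·W(γ)] = β; moreover the supremum is attained at (c, l) = ((1 − β)², 1), where the inner infimum is attained at γ = 2(1 − β). -/
/-- The inner infimum `Ψ(c,l) = inf_{γ ≥ 0} E(γ, c, l)`. -/
noncomputable def Psi (β c l : ℝ) : ℝ :=
  sInf {z : ℝ | ∃ γ : ℝ, 0 ≤ γ ∧ z = Efun β γ c l}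

/- attainment value at the special point -/
lemma efun_att (β : ℝ) (hβ0 : 0 < β) (hβ1 : β < 1 / 2) :
    Efun β (2 * (1 - β)) ((1 - β) ^ 2) 1 = β := by
  have h1β : (0:ℝ) < 1 - β := by linarith
  have hs : Real.sqrt ((1 - β) ^ 2) = 1 - β := Real.sqrt_sq h1β.le
  have hmax : max (1 - 2 * (1 - β)) 0 = 0 := max_eq_right (by linarith)
  unfold Efun Wfun
  rw [hs, Real.sqrt_one, hmax]
  field_simp
  ring

/- lower bound at the special point -/
lemma efun_lb (β : ℝ) (hβ0 : 0 < β) (hβ1 : β < 1 / 2) (γ : ℝ) (_hγ : 0 ≤ γ) :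
    β ≤ Efun β γ ((1 - β) ^ 2) 1 := by
  have h1β : (0:ℝ) < 1 - β := by linarith
  have hs : Real.sqrt ((1 - β) ^ 2) = 1 - β := Real.sqrt_sq h1β.le
  unfold Efun Wfun
  rw [hs, Real.sqrt_one]
  rcases le_total γ 1 with h | h
  · rw [max_eq_left (by linarith)]
    rw [← sub_nonneg]
    have key : (1 - (1 - β) ^ 2 + γ * (1 - β - 1) + β * ((γ ^ 2 / 4 + (1 - γ)) / (1 - β))) - β
        = (β * (γ ^ 2 / 4 + (1 - γ)) - (1 - β) * (β - 1 + (1 - β) ^ 2 + γ * β)) / (1 - β) := by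
      field_simp; ring
    rw [key]
    apply div_nonneg _ h1β.le
    nlinarith [sq_nonneg (1/2 - β), mul_nonneg (sub_nonneg.2 h) hβ0.le,
      mul_nonneg (mul_nonneg (sub_nonneg.2 h) hβ0.le) hβ0.le]
  · rw [max_eq_right (by linarith)]
    rw [← sub_nonneg]
    have key : (1 - (1 - β) ^ 2 + γ * (1 - β - 1) + β * ((γ ^ 2 / 4 + 0) / (1 - β))) - β
        = (β * (γ - 2 * (1 - β)) ^ 2 / 4) / (1 - β) := by
      field_simp; ring
    rw [key]
    positivity

lemma bdd (β c l : ℝ) (hβ0 : 0 < β) (hβ1 : β < 1 / 2) :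
    BddBelow {z : ℝ | ∃ γ : ℝ, 0 ≤ γ ∧ z = Efun β γ c l} := by
  have h1β : (0:ℝ) < 1 - β := by linarith
  set x := Real.sqrt c
  set y := Real.sqrt l
  refine ⟨(l - c) - (x - y) ^ 2 * (1 - β) / β, ?_⟩
  rintro z ⟨γ, hγ, rfl⟩
  have hM : (0:ℝ) ≤ max (1 - γ) 0 := le_max_right _ _
  have key : Efun β γ c l - ((l - c) - (x - y) ^ 2 * (1 - β) / β)
      = (γ * (x - y) * (β * (1 - β)) + (x - y) ^ 2 * (1 - β) ^ 2
          + β ^ 2 * (γ ^ 2 / 4 + max (1 - γ) 0)) / (β * (1 - β)) := by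
    unfold Efun Wfun
    field_simp
    ring
  have h2 : 0 ≤ γ * (x - y) * (β * (1 - β)) + (x - y) ^ 2 * (1 - β) ^ 2
      + β ^ 2 * (γ ^ 2 / 4 + max (1 - γ) 0) := by
    nlinarith [sq_nonneg (β * γ / 2 + (x - y) * (1 - β)),
      mul_nonneg (mul_nonneg hβ0.le hβ0.le) hM]
  nlinarith [div_nonneg h2 (by positivity : (0:ℝ) ≤ β * (1 - β))]

set_option maxHeartbeats 2000000 in
lemma psi_le (β c l : ℝ) (hβ0 : 0 < β) (hβ1 : β < 1 / 2)
    (hc : 0 ≤ c) (hl0 : 0 ≤ l) (hl1 : l ≤ 1) : Psi β c l ≤ β := by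
  have h1β : (0:ℝ) < 1 - β := by linarith
  obtain ⟨x, hxdef⟩ : ∃ x, Real.sqrt c = x := ⟨_, rfl⟩
  obtain ⟨y, hydef⟩ : ∃ y, Real.sqrt l = y := ⟨_, rfl⟩
  have hx0 : 0 ≤ x := hxdef ▸ Real.sqrt_nonneg c
  have hy0 : 0 ≤ y := hydef ▸ Real.sqrt_nonneg l
  have hy1 : y ≤ 1 := by
    rw [← hydef, show (1:ℝ) = Real.sqrt 1 by simp]
    exact Real.sqrt_le_sqrt hl1
  have hxc : x ^ 2 = c := by rw [← hxdef]; exact Real.sq_sqrt hc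
  have hyl : y ^ 2 = l := by rw [← hydef]; exact Real.sq_sqrt hl0
  have step : ∀ γ : ℝ, 0 ≤ γ → Efun β γ c l ≤ β → Psi β c l ≤ β := by
    intro γ hγ hE
    exact le_trans (csInf_le (bdd β c l hβ0 hβ1) ⟨γ, hγ, rfl⟩) hE
  rcases le_or_gt (x - y) (-(β / (2 * (1 - β)))) with h1 | h1
  · -- region 1 : γ = -2(x-y)(1-β)/β ≥ 1
    have hApos : (0:ℝ) < β / (2 * (1 - β)) := by positivity
    have hsneg : x - y ≤ 0 := by linarith
    have h1' : β ≤ -(x - y) * (2 * (1 - β)) := by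
      have : β / (2 * (1 - β)) ≤ -(x - y) := by linarith
      exact (div_le_iff₀ (by positivity)).mp this
    refine step (-(2 * (x - y) * (1 - β) / β)) ?_ ?_
    · have h := div_nonneg (by nlinarith : (0:ℝ) ≤ -(2 * (x - y) * (1 - β))) hβ0.le
      rw [neg_div] at h
      exact h
    · have hγ1 : (1:ℝ) ≤ -(2 * (x - y) * (1 - β) / β) := by
        have : 2 * (x - y) * (1 - β) / β ≤ -1 := by
          rw [div_le_iff₀ hβ0]; nlinarith
        linarith
      rw [← sub_nonneg]
      have key : β - Efun β (-(2 * (x - y) * (1 - β) / β)) c l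
          = (β * (β - (y ^ 2 - x ^ 2)) + (x - y) ^ 2 * (1 - β)) / β := by
        unfold Efun Wfun
        rw [hxdef, hydef, max_eq_right (by linarith), ← hxc, ← hyl]
        field_simp
        ring
      rw [key]
      apply div_nonneg _ hβ0.le
      nlinarith [sq_nonneg (β + (x - y)),
        mul_nonneg (mul_nonneg hβ0.le (by linarith : (0:ℝ) ≤ -(x - y)))
          (by linarith : (0:ℝ) ≤ 1 - y)]
  · rcases le_or_gt (x - y) (β / (2 * (1 - β))) with h2 | h2
    · -- region 2 : γ = 1
      refine step 1 zero_le_one ?_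
      rw [← sub_nonneg]
      have key : β - Efun β 1 c l
          = ((β - (y ^ 2 - x ^ 2 + (x - y))) * (4 * (1 - β)) - β) / (4 * (1 - β)) := by
        unfold Efun Wfun
        rw [hxdef, hydef, max_eq_right (by norm_num), ← hxc, ← hyl]
        field_simp
        ring
      rw [key]
      apply div_nonneg _ (by positivity)
      have hm2' : (0:ℝ) ≤ β - 2 * (x - y) * (1 - β) := by
        nlinarith [(le_div_iff₀ (by positivity : (0:ℝ) < 2 * (1 - β))).mp h2]
      have hm1' : (0:ℝ) ≤ β + 2 * (x - y) * (1 - β) := by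
        nlinarith [(lt_div_iff₀ (by positivity : (0:ℝ) < 2 * (1 - β))).mp
          (by linarith : -(x - y) < β / (2 * (1 - β)))]
      rcases le_total 0 (x - y) with hs0 | hs0
      · nlinarith [mul_nonneg hm2' hm2', mul_nonneg hm2' (by linarith : (0:ℝ) ≤ 1 - 2 * β),
          mul_nonneg (mul_nonneg (mul_nonneg hs0 hy0) h1β.le) h1β.le,
          mul_nonneg hβ0.le (sq_nonneg (1 - 2 * β))]
      · nlinarith [mul_nonneg hm1' hm1', mul_nonneg hm1' (by linarith : (0:ℝ) ≤ 1 - 2 * β),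
          mul_nonneg (mul_nonneg (mul_nonneg (by linarith : (0:ℝ) ≤ -(x - y))
            (by linarith : (0:ℝ) ≤ 1 - y)) h1β.le) h1β.le,
          mul_nonneg hβ0.le (sq_nonneg (1 - 2 * β))]
    · rcases le_or_gt (x - y) (β / (1 - β)) with h3 | h3
      · -- region 3 : γ = 2 - 2(x-y)(1-β)/β ∈ [0,1]
        have h2' : β < (x - y) * (2 * (1 - β)) := (div_lt_iff₀ (by positivity)).mp h2
        have h3' : (x - y) * (1 - β) ≤ β := (le_div_iff₀ h1β).mp h3
        have hs0 : 0 < x - y := by nlinarith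
        have hγ0 : 0 ≤ 2 - 2 * (x - y) * (1 - β) / β := by
          have : 2 * (x - y) * (1 - β) / β ≤ 2 := by
            rw [div_le_iff₀ hβ0]; nlinarith
          linarith
        have hγ1 : 2 - 2 * (x - y) * (1 - β) / β ≤ 1 := by
          have : 1 ≤ 2 * (x - y) * (1 - β) / β := by
            rw [le_div_iff₀ hβ0]; nlinarith
          linarith
        refine step (2 - 2 * (x - y) * (1 - β) / β) hγ0 ?_
        rw [← sub_nonneg]
        have key : β - Efun β (2 - 2 * (x - y) * (1 - β) / β) c l
            = ((β - (x - y) * (2 - x - y)) * β + (x - y) ^ 2 * (1 - β)) / β := by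
          unfold Efun Wfun
          rw [hxdef, hydef, max_eq_left (by linarith), ← hxc, ← hyl]
          field_simp
          ring
        rw [key]
        apply div_nonneg _ hβ0.le
        nlinarith [sq_nonneg (β - (x - y)),
          mul_nonneg (mul_nonneg hβ0.le hs0.le) (by nlinarith : (0:ℝ) ≤ x + y - (x - y))]
      · -- region 4 : γ = 0
        have hs0 : 0 < x - y := lt_trans (by positivity) h3
        have hss : β < (x - y) * (1 - β) := by
          have := (div_lt_iff₀ h1β).mp h3
          linarith
        refine step 0 le_rfl ?_
        rw [← sub_nonneg]
        have key : β - Efun β 0 c l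
            = ((β - (y ^ 2 - x ^ 2)) * (1 - β) - β) / (1 - β) := by
          unfold Efun Wfun
          rw [hxdef, hydef, max_eq_left (by norm_num), ← hxc, ← hyl]
          field_simp
          ring
        rw [key]
        apply div_nonneg _ h1β.le
        have hxys : (0:ℝ) ≤ x + y - (x - y) := by linarith
        nlinarith [mul_pos hs0 (by linarith : (0:ℝ) < (x - y) * (1 - β) - β),
          mul_pos hβ0 (by linarith : (0:ℝ) < (x - y) * (1 - β) - β),
          mul_nonneg (mul_nonneg hβ0.le hβ0.le) hs0.le,
          mul_nonneg (mul_nonneg hs0.le hxys) h1β.le]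

/-- **value of the sup-inf functional equation, σ = 1/2.**
For `β ∈ (0, 1/2)`,
`sup_{c ≥ 0, l ∈ [0,1]} inf_{γ ≥ 0} [(l − c) + γ(√c − √l) + β·W(γ)] = β`, the supremum
being attained at `(c,l) = ((1 − β)², 1)`, where the inner infimum is attained at
`γ = 2(1 − β)`. -/
theorem stmt12 (β : ℝ) (hβ0 : 0 < β) (hβ1 : β < 1 / 2) :
    IsGreatest {z : ℝ | ∃ c l : ℝ, 0 ≤ c ∧ 0 ≤ l ∧ l ≤ 1 ∧ z = Psi β c l} β
    ∧ Psi β ((1 - β) ^ 2) 1 = β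
    ∧ Efun β (2 * (1 - β)) ((1 - β) ^ 2) 1 = Psi β ((1 - β) ^ 2) 1 := by
  have h1β : (0:ℝ) < 1 - β := by linarith
  have hpsi : Psi β ((1 - β) ^ 2) 1 = β := by
    apply le_antisymm
    · exact psi_le β _ _ hβ0 hβ1 (by positivity) zero_le_one le_rfl
    · refine le_csInf ⟨Efun β 0 ((1 - β) ^ 2) 1, ⟨0, le_rfl, rfl⟩⟩ ?_
      rintro z ⟨γ, hγ, rfl⟩
      exact efun_lb β hβ0 hβ1 γ hγ
  refine ⟨⟨⟨(1 - β) ^ 2, 1, by positivity, zero_le_one, le_rfl, hpsi.symm⟩, ?_⟩,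
    hpsi, by rw [hpsi, efun_att β hβ0 hβ1]⟩
  rintro z ⟨c, l, hc, hl0, hl1, rfl⟩
  exact psi_le β c l hβ0 hβ1 hc hl0 hl1
end

section
/- Let β ∈ (0, 1/2). There is no sequence (l_t)_{t∈ℕ} with l_t ∈ {0,1} for every t such that ∑_{t=0}^∞ β^t l_t = (1 − β/2)/(1 − β). -/
/-- For `β ∈ (0, 1/2)` there is no `{0,1}`-valued sequence
`(l_t)` with `∑_{t=0}^∞ β^t l_t = (1 − β/2)/(1 − β)`. -/
theorem stmt13 (β : ℝ) (hβ0 : 0 < β) (hβ1 : β < 1 / 2) :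
    ¬ ∃ l : ℕ → ℝ, (∀ t, l t = 0 ∨ l t = 1) ∧
      (∑' t : ℕ, β ^ t * l t) = (1 - β / 2) / (1 - β) := by
  rintro ⟨l, hl, hS⟩
  have hβ1' : β < 1 := by linarith
  have hgeo : Summable (fun t : ℕ => β ^ t) :=
    summable_geometric_of_lt_one hβ0.le hβ1'
  have hnn : ∀ (m : ℕ → ℝ), (∀ t, m t = 0 ∨ m t = 1) → ∀ t, 0 ≤ β ^ t * m t := by
    intro m hm t
    rcases hm t with h | h <;> simp [h] <;> positivity
  have hub : ∀ (m : ℕ → ℝ), (∀ t, m t = 0 ∨ m t = 1) → ∀ t, β ^ t * m t ≤ β ^ t := by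
    intro m hm t
    rcases hm t with h | h <;> simp [h] <;> positivity
  have hsummable : ∀ (m : ℕ → ℝ), (∀ t, m t = 0 ∨ m t = 1) →
      Summable (fun t => β ^ t * m t) := by
    intro m hm
    exact Summable.of_nonneg_of_le (hnn m hm) (hub m hm) hgeo
  have htsum_bounds : ∀ (m : ℕ → ℝ), (∀ t, m t = 0 ∨ m t = 1) →
      0 ≤ (∑' t : ℕ, β ^ t * m t) ∧ (∑' t : ℕ, β ^ t * m t) ≤ (1 - β)⁻¹ := by
    intro m hm
    constructor
    · exact tsum_nonneg (hnn m hm)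
    · calc (∑' t : ℕ, β ^ t * m t) ≤ ∑' t : ℕ, β ^ t :=
            Summable.tsum_le_tsum (hub m hm) (hsummable m hm) hgeo
        _ = (1 - β)⁻¹ := tsum_geometric_of_lt_one hβ0.le hβ1'
  -- peel off two terms
  have shift : ∀ (m : ℕ → ℝ), (∀ t, m t = 0 ∨ m t = 1) →
      (∑' t : ℕ, β ^ t * m t) = m 0 + β * (∑' t : ℕ, β ^ t * m (t + 1)) := by
    intro m hm
    rw [Summable.tsum_eq_zero_add (hsummable m hm)]
    rw [← tsum_mul_left, pow_zero, one_mul]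
    congr 1
    exact tsum_congr fun t => by rw [pow_succ]; ring
  have hm1 : ∀ t, (fun s => l (s + 1)) t = 0 ∨ (fun s => l (s + 1)) t = 1 := fun t => hl (t + 1)
  have hm2 : ∀ t, (fun s => l (s + 2)) t = 0 ∨ (fun s => l (s + 2)) t = 1 := fun t => hl (t + 2)
  have h1 := shift l hl
  have h2 := shift (fun s => l (s + 1)) hm1
  have h2' : (∑' t : ℕ, β ^ t * l (t + 1)) = l 1 + β * (∑' t : ℕ, β ^ t * l (t + 2)) := h2
  set T := ∑' t : ℕ, β ^ t * l (t + 2) with hT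
  obtain ⟨hT0, hT1⟩ := htsum_bounds (fun s => l (s + 2)) hm2
  have hT1' : T * (1 - β) ≤ 1 := by
    have h1β : 0 < 1 - β := by linarith
    rw [← le_div_iff₀ h1β] at *
    simpa [one_div] using hT1
  rw [h1, h2'] at hS
  have hden : (1 - β) ≠ 0 := by linarith
  have key : (l 0 + β * (l 1 + β * T)) * (1 - β) = 1 - β / 2 := by
    field_simp at hS
    linarith [hS]
  have hT0' : 0 ≤ T := hT0
  have hU0 : 0 ≤ T * (1 - β) := mul_nonneg hT0' (by linarith)
  rcases hl 0 with h0 | h0 <;> rcases hl 1 with h1' | h1' <;>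
    rw [h0, h1'] at key <;>
    nlinarith [hU0, hT1', sq_nonneg β, mul_pos hβ0 hβ0,
      mul_nonneg (mul_nonneg hβ0.le hβ0.le) hU0, mul_le_of_le_one_right (mul_pos hβ0 hβ0).le hT1']
end

section
/- Let σ ∈ (0,1) and β ∈ (0,1/2) satisfy 1 − β/2 = σ^{σ/(1−σ)}. Then for every pair of sequences (c_t)_{t∈ℕ}, (l_t)_{t∈ℕ} with 0 ≤ c_t ≤ C for some constant C, l_t ∈ [0,1] for all t, and ∑_{t=0}^∞ β^t (c_t^σ − l_t^σ) ≥ 0, one has the strict inequality ∑_{t=0}^∞ β^t (l_t − c_t) < (1 − β/2 − σ^{1/(1−σ)})/(1 − β). -/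
/-!
Pointwise, `(l - c) + (c ^ σ - l ^ σ) = (c ^ σ - c) - (l ^ σ - l)`. On `[0, 1]` we have `l ≤ l ^ σ`,
and by concavity `x ^ σ - x` is maximised at `x = σ ^ (1 / (1 - σ))`, where it equals
`σ ^ (σ / (1 - σ)) - σ ^ (1 / (1 - σ)) = 1 - β / 2 - σ ^ (1 / (1 - σ))` by the calibration.
Discounting and the participation constraint give the weak inequality. Equality would force
`c t = σ ^ (1 / (1 - σ))`, `l t ∈ {0, 1}` for all `t` and a binding constraint
`∑ β ^ t l t = (1 - β / 2) / (1 - β)`; but for `β < 1 / 2` no `{0, 1}`-sequence has this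
discounted sum.
-/
section RpowConcave

variable {σ : ℝ}

theorem rpow_lt_rpow_add_mul_sub {a x : ℝ} (hσ0 : 0 < σ) (hσ1 : σ < 1) (ha : 0 < a)
    (hx : 0 ≤ x) (hxa : x ≠ a) : x ^ σ < a ^ σ + σ * a ^ (σ - 1) * (x - a) := by
  have hs : -1 ≤ x / a - 1 := by have := div_nonneg hx ha.le; linarith
  have hs0 : x / a - 1 ≠ 0 := by
    rw [sub_ne_zero, Ne, div_eq_one_iff_eq ha.ne']; exact hxa
  have hB := rpow_one_add_lt_one_add_mul_self hs hs0 hσ0 hσ1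
  have hxa' : x = a * (1 + (x / a - 1)) := by field_simp; ring
  calc x ^ σ = a ^ σ * (1 + (x / a - 1)) ^ σ := by
        rw [← Real.mul_rpow ha.le (by linarith), ← hxa']
    _ < a ^ σ * (1 + σ * (x / a - 1)) := by gcongr
    _ = a ^ σ + σ * a ^ (σ - 1) * (x - a) := by
        rw [Real.rpow_sub_one ha.ne']; field_simp

theorem rpow_one_div_one_sub_rpow (hσ0 : 0 ≤ σ) (hσ1 : σ ≠ 1) :
    (σ ^ (1 / (1 - σ))) ^ σ = σ ^ (σ / (1 - σ)) := by
  rw [← Real.rpow_mul hσ0]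
  congr 1
  field_simp [sub_ne_zero.2 hσ1.symm]

/-- The tangent to `x ^ σ` at `σ ^ (1 / (1 - σ))` has slope `1`. -/
theorem rpow_sub_self_lt {x : ℝ} (hσ0 : 0 < σ) (hσ1 : σ < 1) (hx : 0 ≤ x)
    (hne : x ≠ σ ^ (1 / (1 - σ))) :
    x ^ σ - x < σ ^ (σ / (1 - σ)) - σ ^ (1 / (1 - σ)) := by
  have hslope : σ * (σ ^ (1 / (1 - σ))) ^ (σ - 1) = 1 := by
    rw [← Real.rpow_mul hσ0.le, show 1 / (1 - σ) * (σ - 1) = -1 by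
      field_simp [(sub_pos.2 hσ1).ne']; ring, Real.rpow_neg_one, mul_inv_cancel₀ hσ0.ne']
  have := rpow_lt_rpow_add_mul_sub hσ0 hσ1 (Real.rpow_pos_of_pos hσ0 _) hx hne
  rw [hslope, rpow_one_div_one_sub_rpow hσ0.le hσ1.ne] at this
  linarith

theorem rpow_sub_self_le {x : ℝ} (hσ0 : 0 < σ) (hσ1 : σ < 1) (hx : 0 ≤ x) :
    x ^ σ - x ≤ σ ^ (σ / (1 - σ)) - σ ^ (1 / (1 - σ)) := by
  rcases eq_or_ne x (σ ^ (1 / (1 - σ))) with rfl | hne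
  · rw [rpow_one_div_one_sub_rpow hσ0.le hσ1.ne]
  · exact (rpow_sub_self_lt hσ0 hσ1 hx hne).le

end RpowConcave

section Payoff

variable {σ : ℝ}

theorem sub_add_rpow_sub_rpow_le (hσ0 : 0 < σ) (hσ1 : σ < 1) {c l : ℝ} (hc : 0 ≤ c)
    (hl0 : 0 ≤ l) (hl1 : l ≤ 1) :
    (l - c) + (c ^ σ - l ^ σ) ≤ σ ^ (σ / (1 - σ)) - σ ^ (1 / (1 - σ)) := by
  have := rpow_sub_self_le hσ0 hσ1 hc
  have := Real.self_le_rpow_of_le_one hl0 hl1 hσ1.le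
  linarith

theorem sub_add_rpow_sub_rpow_lt (hσ0 : 0 < σ) (hσ1 : σ < 1) {c l : ℝ} (hc : 0 ≤ c)
    (hl0 : 0 ≤ l) (hl1 : l ≤ 1) (h : ¬(c = σ ^ (1 / (1 - σ)) ∧ (l = 0 ∨ l = 1))) :
    (l - c) + (c ^ σ - l ^ σ) < σ ^ (σ / (1 - σ)) - σ ^ (1 / (1 - σ)) := by
  rcases not_and_or.1 h with hc' | hl'
  · have := rpow_sub_self_lt hσ0 hσ1 hc hc'
    have := Real.self_le_rpow_of_le_one hl0 hl1 hσ1.le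
    linarith
  · rw [not_or] at hl'
    have := rpow_sub_self_le hσ0 hσ1 hc
    have := Real.self_lt_rpow_of_lt_one (hl0.lt_of_ne' hl'.1) (hl1.lt_of_ne hl'.2) hσ1
    linarith

end Payoff

section Discounting

variable {β : ℝ}

theorem summable_pow_mul_of_abs_le (hβ0 : 0 ≤ β) (hβ1 : β < 1) {f : ℕ → ℝ} {B : ℝ}
    (hf : ∀ t, |f t| ≤ B) : Summable fun t ↦ β ^ t * f t := by
  refine .of_norm_bounded ((summable_geometric_of_lt_one hβ0 hβ1).mul_right B) fun t ↦ ?_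
  rw [norm_mul, norm_pow, Real.norm_of_nonneg hβ0, Real.norm_eq_abs]
  exact mul_le_mul_of_nonneg_left (hf t) (by positivity)

theorem tsum_pow_mul_le_inv_sub (hβ0 : 0 ≤ β) (hβ1 : β < 1) {l : ℕ → ℝ}
    (hl0 : ∀ t, 0 ≤ l t) (hl1 : ∀ t, l t ≤ 1) (t : ℕ) :
    ∑' s, β ^ s * l s ≤ (1 - β)⁻¹ - β ^ t * (1 - l t) := by
  have hgap : Summable fun s ↦ β ^ s * (1 - l s) :=
    summable_pow_mul_of_abs_le hβ0 hβ1 fun s ↦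
      abs_sub_le_of_nonneg_of_le zero_le_one le_rfl (hl0 s) (hl1 s)
  have hsplit : ∑' s, β ^ s * l s = (1 - β)⁻¹ - ∑' s, β ^ s * (1 - l s) := by
    rw [← tsum_geometric_of_lt_one hβ0 hβ1, ← (summable_geometric_of_lt_one hβ0 hβ1).tsum_sub hgap]
    exact tsum_congr fun s ↦ by ring
  have := hgap.le_tsum t fun s _ ↦ mul_nonneg (pow_nonneg hβ0 s) (by linarith [hl1 s])
  linarith

/-- If `l 0 = l 1 = 1` the sum is at least `1 + β`; otherwise some `l t = 0` with `t ≤ 1` and it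
is at most `(1 - β)⁻¹ - β`. For `β < 1/2` the value `(1 - β/2)/(1 - β)` lies strictly between. -/
theorem tsum_pow_mul_ne_of_binary (hβ0 : 0 < β) (hβ1 : β < 1 / 2) {l : ℕ → ℝ}
    (hl : ∀ t, l t = 0 ∨ l t = 1) : ∑' t, β ^ t * l t ≠ (1 - β / 2) / (1 - β) := by
  have hl0 : ∀ t, 0 ≤ l t := fun t ↦ by rcases hl t with h | h <;> simp [h]
  have hl1 : ∀ t, l t ≤ 1 := fun t ↦ by rcases hl t with h | h <;> simp [h]
  have h1β : 0 < 1 - β := by linarith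
  intro hS
  rw [eq_div_iff h1β.ne'] at hS
  by_cases h11 : l 0 = 1 ∧ l 1 = 1
  · have hsum := summable_pow_mul_of_abs_le hβ0.le (by linarith) (B := 1) fun s ↦
      abs_le.2 ⟨by linarith [hl0 s], hl1 s⟩
    have := hsum.sum_le_tsum (Finset.range 2) fun s _ ↦ mul_nonneg (pow_nonneg hβ0.le s) (hl0 s)
    simp only [Finset.sum_range_succ, Finset.sum_range_zero, h11] at this
    nlinarith
  · obtain ⟨t, ht, hlt⟩ : ∃ t ≤ 1, l t = 0 := by
      rcases hl 0 with h0 | h0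
      · exact ⟨0, zero_le_one, h0⟩
      rcases hl 1 with h1 | h1
      · exact ⟨1, le_rfl, h1⟩
      · exact absurd ⟨h0, h1⟩ h11
    have hβt : β ≤ β ^ t := by
      simpa using pow_le_pow_of_le_one hβ0.le (by linarith) ht
    have := tsum_pow_mul_le_inv_sub hβ0.le (by linarith) hl0 hl1 t
    rw [hlt, sub_zero, mul_one] at this
    have := mul_le_mul_of_nonneg_right this h1β.le
    rw [sub_mul, inv_mul_cancel₀ h1β.ne'] at this
    nlinarith

end Discounting

theorem tsum_lt_tsum_of_add_le {ι : Type*} {f g h : ι → ℝ} (hf : Summable f) (hg : Summable g)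
    (hh : Summable h) (hle : ∀ i, f i + g i ≤ h i) (hg0 : 0 ≤ ∑' i, g i)
    (hstrict : (∃ i, f i + g i < h i) ∨ ∑' i, g i ≠ 0) : ∑' i, f i < ∑' i, h i := by
  have hsplit : ∑' i, f i = ∑' i, (f i + g i) - ∑' i, g i := by
    rw [← (hf.add hg).tsum_sub hg]; simp only [add_sub_cancel_right]
  rw [hsplit]
  rcases hstrict with ⟨i, hi⟩ | hg0'
  · linarith [(hf.add hg).tsum_lt_tsum hle hi hh]
  · linarith [(hf.add hg).tsum_le_tsum hle hh, hg0.lt_of_ne hg0'.symm]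

theorem tsum_pow_mul_rpow_sub_rpow_ne_zero {σ β : ℝ} (hσ0 : 0 < σ) (hσ1 : σ < 1) (hβ0 : 0 < β)
    (hβ1 : β < 1 / 2) (hcal : 1 - β / 2 = σ ^ (σ / (1 - σ))) {c l : ℕ → ℝ}
    (hext : ∀ t, c t = σ ^ (1 / (1 - σ)) ∧ (l t = 0 ∨ l t = 1)) :
    ∑' t, β ^ t * (c t ^ σ - l t ^ σ) ≠ 0 := by
  have hβ1' : β < 1 := by linarith
  have hl : ∀ t, |l t| ≤ 1 := fun t ↦ by rcases (hext t).2 with h | h <;> simp [h]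
  have hpt : ∀ t, β ^ t * (c t ^ σ - l t ^ σ) = β ^ t * (1 - β / 2) - β ^ t * l t := fun t ↦ by
    obtain ⟨hct, hlt⟩ := hext t
    have hlσ : l t ^ σ = l t := by rcases hlt with h | h <;> simp [h, hσ0.ne']
    rw [hct, rpow_one_div_one_sub_rpow hσ0.le hσ1.ne, ← hcal, hlσ, mul_sub]
  rw [tsum_congr hpt, ((summable_geometric_of_lt_one hβ0.le hβ1').mul_right _).tsum_sub
    (summable_pow_mul_of_abs_le hβ0.le hβ1' hl), tsum_mul_right,
    tsum_geometric_of_lt_one hβ0.le hβ1', sub_ne_zero, ← div_eq_inv_mul]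
  exact (tsum_pow_mul_ne_of_binary hβ0 hβ1 fun t ↦ (hext t).2).symm

/-- **strict suboptimality of lottery-free plans in Example 2.**
Let `σ ∈ (0,1)` and `β ∈ (0,1/2)` satisfy `1 − β/2 = σ^{σ/(1−σ)}`. Then any sequences
`(c_t)` (nonnegative, bounded) and `(l_t)` (in `[0,1]`) satisfying the participation
constraint `∑ β^t (c_t^σ − l_t^σ) ≥ 0` give the principal strictly less than the
lottery value: `∑ β^t (l_t − c_t) < (1 − β/2 − σ^{1/(1−σ)})/(1 − β)`. -/
theorem stmt14 (σ β : ℝ) (hσ0 : 0 < σ) (hσ1 : σ < 1) (hβ0 : 0 < β) (hβ1 : β < 1 / 2)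
    (hcal : 1 - β / 2 = σ ^ (σ / (1 - σ)))
    (c l : ℕ → ℝ) (C : ℝ)
    (hc0 : ∀ t, 0 ≤ c t) (hcC : ∀ t, c t ≤ C)
    (hl : ∀ t, 0 ≤ l t ∧ l t ≤ 1)
    (hpc : 0 ≤ ∑' t : ℕ, β ^ t * ((c t) ^ σ - (l t) ^ σ)) :
    (∑' t : ℕ, β ^ t * (l t - c t)) < (1 - β / 2 - σ ^ (1 / (1 - σ))) / (1 - β) := by
  set M := σ ^ (σ / (1 - σ)) - σ ^ (1 / (1 - σ))
  have hβ1' : β < 1 := by linarith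
  have hbound : (1 - β / 2 - σ ^ (1 / (1 - σ))) / (1 - β) = ∑' t : ℕ, β ^ t * M := by
    rw [tsum_mul_right, tsum_geometric_of_lt_one hβ0.le hβ1', hcal, div_eq_inv_mul]
  have hcσ : ∀ t, c t ^ σ ≤ max (C ^ σ) 1 := fun t ↦
    (Real.rpow_le_rpow (hc0 t) (hcC t) hσ0.le).trans (le_max_left _ _)
  have hlσ : ∀ t, l t ^ σ ≤ max (C ^ σ) 1 := fun t ↦
    (Real.rpow_le_one (hl t).1 (hl t).2 hσ0.le).trans (le_max_right _ _)
  rw [hbound]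
  refine tsum_lt_tsum_of_add_le
    (summable_pow_mul_of_abs_le hβ0.le hβ1' fun t ↦ abs_sub_le_of_nonneg_of_le (hl t).1
      ((hl t).2.trans (le_max_left 1 C)) (hc0 t) ((hcC t).trans (le_max_right 1 C)))
    (summable_pow_mul_of_abs_le hβ0.le hβ1' fun t ↦ abs_sub_le_of_nonneg_of_le
      (Real.rpow_nonneg (hc0 t) σ) (hcσ t) (Real.rpow_nonneg (hl t).1 σ) (hlσ t))
    ((summable_geometric_of_lt_one hβ0.le hβ1').mul_right M) (fun t ↦ ?_) hpc ?_
  · rw [← mul_add]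
    exact mul_le_mul_of_nonneg_left
      (sub_add_rpow_sub_rpow_le hσ0 hσ1 (hc0 t) (hl t).1 (hl t).2) (by positivity)
  by_cases hext : ∀ t, c t = σ ^ (1 / (1 - σ)) ∧ (l t = 0 ∨ l t = 1)
  · exact .inr (tsum_pow_mul_rpow_sub_rpow_ne_zero hσ0 hσ1 hβ0 hβ1 hcal hext)
  · obtain ⟨t, ht⟩ := not_forall.1 hext
    refine .inl ⟨t, ?_⟩
    rw [← mul_add]
    exact mul_lt_mul_of_pos_left
      (sub_add_rpow_sub_rpow_lt hσ0 hσ1 (hc0 t) (hl t).1 (hl t).2 ht) (by positivity)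
end

section
/- Let β ∈ (0, 1/2). Then sup{ ∑_{t=0}^∞ β^t (l_t − c_t) : (c_t) a bounded sequence with c_t ≥ 0 for all t, l_t ∈ [0,1] for all t, and ∑_{t=0}^∞ β^t (√c_t − √l_t) ≥ 0 } = β, and the supremum is attained by l_0 = 1, l_t = 0 for t ≥ 1, and c_t = (1 − β)² for all t. -/
/-!
Write `S = ∑ βᵗ √lₜ`, `T = ∑ βᵗ √cₜ` and `a = √l₀`. The participation constraint says `S ≤ T`,
and Cauchy–Schwarz against the weights `βᵗ` gives `∑ βᵗ cₜ ≥ (1 - β) T² ≥ (1 - β) S²`.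
Since `lₜ ≤ √lₜ` on `[0, 1]`, the labor term is at most `a² + R` with `R = S - a`, and
`0 ≤ R ≤ β / (1 - β)`. It remains to maximise the quadratic `a² + R - (1 - β)(a + R)²` over
this rectangle; for `β ≤ 1/2` its maximum `β` is attained at the corner `a = 1`, `R = 0`,
which is the plan `l = (1, 0, 0, …)`, `c ≡ (1 - β)²`.
-/

open Real

section Discounted

variable {β : ℝ}

lemma summable_pow_mul_of_nonneg_of_le (hβ0 : 0 ≤ β) (hβ1 : β < 1) {f : ℕ → ℝ} {M : ℝ}
    (hf0 : ∀ t, 0 ≤ f t) (hfM : ∀ t, f t ≤ M) :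
    Summable fun t => β ^ t * f t :=
  Summable.of_nonneg_of_le (fun t => mul_nonneg (pow_nonneg hβ0 t) (hf0 t))
    (fun t => by rw [mul_comm]; exact mul_le_mul_of_nonneg_right (hfM t) (pow_nonneg hβ0 t))
    ((summable_geometric_of_lt_one hβ0 hβ1).mul_left M)

lemma tsum_pow_mul_sub {f g : ℕ → ℝ} (hf : Summable fun t => β ^ t * f t)
    (hg : Summable fun t => β ^ t * g t) :
    ∑' t, β ^ t * (f t - g t) = ∑' t, β ^ t * f t - ∑' t, β ^ t * g t := by
  simp_rw [mul_sub]
  exact hf.tsum_sub hg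

lemma apply_zero_le_tsum_pow_mul (hβ0 : 0 ≤ β) {f : ℕ → ℝ} (hf : Summable fun t => β ^ t * f t)
    (hf0 : ∀ t, 0 ≤ f t) : f 0 ≤ ∑' t, β ^ t * f t := by
  simpa using hf.le_tsum 0 fun t _ => mul_nonneg (pow_nonneg hβ0 t) (hf0 t)

lemma hasSum_pow_mul_sub_ite_zero (hβ0 : 0 ≤ β) (hβ1 : β < 1) (x y : ℝ) :
    HasSum (fun t : ℕ => β ^ t * (y - if t = 0 then x else 0)) (y / (1 - β) - x) := by
  have hδ : (fun t : ℕ => β ^ t * if t = 0 then x else 0) = fun t => if t = 0 then x else 0 := by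
    funext t
    split_ifs with ht <;> simp [ht]
  simp_rw [mul_sub, div_eq_mul_inv, mul_comm y]
  exact ((hasSum_geometric_of_lt_one hβ0 hβ1).mul_right y).sub (hδ ▸ hasSum_ite_eq 0 x)

/-- Cauchy–Schwarz for the discount weights `βᵗ`, whose total mass is `(1 - β)⁻¹`. -/
lemma one_sub_mul_sq_tsum_sqrt_le (hβ0 : 0 ≤ β) (hβ1 : β < 1) {c : ℕ → ℝ}
    (hc0 : ∀ t, 0 ≤ c t) (hc : Summable fun t => β ^ t * c t)
    (hsc : Summable fun t => β ^ t * √(c t)) :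
    (1 - β) * (∑' t, β ^ t * √(c t)) ^ 2 ≤ ∑' t, β ^ t * c t := by
  set T := ∑' t, β ^ t * √(c t)
  set γ := (1 - β) * T
  have hgeo := hasSum_geometric_of_lt_one hβ0 hβ1
  -- AM-GM `2 γ √c ≤ c + γ²` with the optimal `γ`
  have hpt : ∀ t, 2 * γ * (β ^ t * √(c t)) - γ ^ 2 * β ^ t ≤ β ^ t * c t := by
    intro t
    linear_combination mul_nonneg (pow_nonneg hβ0 t) (sq_nonneg (√(c t) - γ))
      + β ^ t * sq_sqrt (hc0 t)
  have hsum : HasSum (fun t => 2 * γ * (β ^ t * √(c t)) - γ ^ 2 * β ^ t)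
      (2 * γ * T - γ ^ 2 * (1 - β)⁻¹) :=
    (hsc.hasSum.mul_left _).sub (hgeo.mul_left _)
  have hle := hasSum_le hpt hsum hc.hasSum
  have hγ : 2 * γ * T - γ ^ 2 * (1 - β)⁻¹ = (1 - β) * T ^ 2 := by
    field_simp [show 1 - β ≠ 0 by linarith]
    ring
  linarith

end Discounted

lemma sq_add_sub_one_sub_mul_sq_add_le {a R β : ℝ} (ha0 : 0 ≤ a) (ha1 : a ≤ 1) (hR0 : 0 ≤ R)
    (hRβ : (1 - β) * R ≤ β) (hβ : β ≤ 1 / 2) :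
    a ^ 2 + R - (1 - β) * (a + R) ^ 2 ≤ β := by
  have hβ0 : 0 ≤ β := by nlinarith
  have hR1 : R ≤ 1 := by nlinarith
  have h1 : 0 ≤ (1 - a) * (β - (1 - β) * R) * (1 - R) :=
    mul_nonneg (mul_nonneg (by linarith) (by linarith)) (by linarith)
  have h2 : 0 ≤ a * ((1 - 2 * β) * R + (1 - β) * R ^ 2) :=
    mul_nonneg ha0 (add_nonneg (mul_nonneg (by linarith) hR0)
      (mul_nonneg (by linarith) (sq_nonneg R)))
  have h3 : 0 ≤ β * a * (1 - a) := mul_nonneg (mul_nonneg hβ0 ha0) (by linarith)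
  linear_combination h1 + h2 + h3

lemma tsum_pow_mul_sub_le_of_participation {β C : ℝ} (hβ0 : 0 ≤ β) (hβ : β ≤ 1 / 2)
    {c l : ℕ → ℝ} (hC : ∀ t, c t ≤ C) (hc0 : ∀ t, 0 ≤ c t) (hl : ∀ t, 0 ≤ l t ∧ l t ≤ 1)
    (hpc : 0 ≤ ∑' t, β ^ t * (√(c t) - √(l t))) :
    ∑' t, β ^ t * (l t - c t) ≤ β := by
  have hβ1 : β < 1 := by linarith
  have hsl := summable_pow_mul_of_nonneg_of_le hβ0 hβ1 (fun t => (hl t).1) (fun t => (hl t).2)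
  have hsc := summable_pow_mul_of_nonneg_of_le hβ0 hβ1 hc0 hC
  have hssl := summable_pow_mul_of_nonneg_of_le hβ0 hβ1 (fun t => sqrt_nonneg (l t))
    (fun t => sqrt_le_one.2 (hl t).2)
  have hssc := summable_pow_mul_of_nonneg_of_le hβ0 hβ1 (fun t => sqrt_nonneg (c t))
    (fun t => sqrt_le_sqrt (hC t))
  have hgeo : Summable fun t => β ^ t * (1 : ℝ) := by
    simpa using summable_geometric_of_lt_one hβ0 hβ1
  set S := ∑' t, β ^ t * √(l t)
  set a := √(l 0)
  have hST : S ≤ ∑' t, β ^ t * √(c t) := by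
    rw [tsum_pow_mul_sub hssc hssl] at hpc
    linarith
  have hK := one_sub_mul_sq_tsum_sqrt_le hβ0 hβ1 hc0 hsc hssc
  have hS0 : 0 ≤ S := tsum_nonneg fun t => mul_nonneg (pow_nonneg hβ0 t) (sqrt_nonneg _)
  have haS : a ≤ S := apply_zero_le_tsum_pow_mul hβ0 hssl fun t => sqrt_nonneg _
  -- `lₜ ≤ √lₜ`, with the slack `√l₀ - l₀` of the first period kept
  have hL : a - l 0 ≤ S - ∑' t, β ^ t * l t := by
    rw [← tsum_pow_mul_sub hssl hsl]
    exact apply_zero_le_tsum_pow_mul hβ0 ((hssl.sub hsl).congr fun t => by ring)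
      fun t => sub_nonneg.2 (le_sqrt_self_iff.2 (hl t).2)
  have hR : 1 - a ≤ (1 - β)⁻¹ - S := by
    have hsub := tsum_pow_mul_sub hgeo hssl
    simp only [mul_one, tsum_geometric_of_lt_one hβ0 hβ1] at hsub
    rw [← hsub]
    exact apply_zero_le_tsum_pow_mul hβ0 ((hgeo.sub hssl).congr fun t => by ring)
      fun t => sub_nonneg.2 (sqrt_le_one.2 (hl t).2)
  have hRβ : (1 - β) * (S - a) ≤ β := by
    have h1β : 0 < 1 - β := by linarith
    calc (1 - β) * (S - a) ≤ (1 - β) * ((1 - β)⁻¹ - 1) :=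
          mul_le_mul_of_nonneg_left (by linarith) h1β.le
      _ = β := by field_simp; ring
  have hkey := sq_add_sub_one_sub_mul_sq_add_le (sqrt_nonneg _) (sqrt_le_one.2 (hl 0).2)
    (sub_nonneg.2 haS) hRβ hβ
  rw [add_sub_cancel, sq_sqrt (hl 0).1] at hkey
  rw [tsum_pow_mul_sub hsl hsc]
  linarith [mul_le_mul_of_nonneg_left (pow_le_pow_left₀ hS0 hST 2) (by linarith : 0 ≤ 1 - β)]

/-- **the optimal deterministic value `V⁰ = β` in Example 1.**
For `β ∈ (0, 1/2)`, among all bounded nonnegative consumption plans `(c_t)` and labor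
plans `(l_t)` with `l_t ∈ [0,1]` satisfying the participation constraint
`∑ β^t (√c_t − √l_t) ≥ 0`, the supremum of `∑ β^t (l_t − c_t)` equals `β` and is
attained by `l₀ = 1`, `l_t = 0` for `t ≥ 1`, `c_t = (1 − β)²` for all `t`. -/
theorem stmt17 (β : ℝ) (hβ0 : 0 < β) (hβ1 : β < 1 / 2) :
    IsGreatest {z : ℝ | ∃ c l : ℕ → ℝ,
        (∃ C : ℝ, ∀ t, c t ≤ C) ∧ (∀ t, 0 ≤ c t) ∧ (∀ t, 0 ≤ l t ∧ l t ≤ 1) ∧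
        0 ≤ (∑' t : ℕ, β ^ t * (Real.sqrt (c t) - Real.sqrt (l t))) ∧
        z = ∑' t : ℕ, β ^ t * (l t - c t)} β
    ∧ (0 ≤ ∑' t : ℕ, β ^ t * (Real.sqrt ((1 - β) ^ 2)
          - Real.sqrt (if t = 0 then (1 : ℝ) else 0)))
    ∧ (∑' t : ℕ, β ^ t * ((if t = 0 then (1 : ℝ) else 0) - (1 - β) ^ 2)) = β := by
  have hβ_lt_one : β < 1 := by linarith
  have h1β : 1 - β ≠ 0 := by linarith
  have hconstr : ∑' t : ℕ, β ^ t * (√((1 - β) ^ 2) - √(if t = 0 then (1 : ℝ) else 0)) = 0 := by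
    have hsqrt : ∀ t : ℕ, √((1 - β) ^ 2) - √(if t = 0 then (1 : ℝ) else 0)
        = (1 - β) - if t = 0 then 1 else 0 := by
      intro t
      rw [sqrt_sq (by linarith)]
      split_ifs <;> simp
    simp_rw [hsqrt]
    rw [(hasSum_pow_mul_sub_ite_zero hβ0.le hβ_lt_one 1 (1 - β)).tsum_eq, div_self h1β, sub_self]
  have hvalue : ∑' t : ℕ, β ^ t * ((if t = 0 then (1 : ℝ) else 0) - (1 - β) ^ 2) = β := by
    have hneg : (fun t : ℕ => β ^ t * ((if t = 0 then (1 : ℝ) else 0) - (1 - β) ^ 2))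
        = fun t => -(β ^ t * ((1 - β) ^ 2 - if t = 0 then 1 else 0)) := by
      funext t
      ring
    rw [hneg, (hasSum_pow_mul_sub_ite_zero hβ0.le hβ_lt_one 1 _).neg.tsum_eq]
    field_simp
    ring
  refine ⟨⟨⟨_, _, ⟨_, fun _ => le_rfl⟩, fun _ => sq_nonneg _, fun t => by split_ifs <;> norm_num,
    hconstr.ge, hvalue.symm⟩, ?_⟩, hconstr.ge, hvalue⟩
  rintro z ⟨c, l, ⟨C, hC⟩, hc0, hl, hpc, rfl⟩
  exact tsum_pow_mul_sub_le_of_participation hβ0.le hβ1.le hC hc0 hl hpc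
end

section
/- In the dynamic-programming setting below, the Bellman operator preserves L-Lipschitz continuity in the multiplier variable: if F : [0,∞)^I × X × S → ℝ satisfies |F(γ₁, x, s) − F(γ₂, x, s)| ≤ L·‖γ₁ − γ₂‖₁ for all γ₁, γ₂ ∈ [0,∞)^I, x ∈ X, s ∈ S, then for all γ₁, γ₂ ∈ [0,∞)^I, x ∈ X, s ∈ S one has ℬ(F)(γ₁, x, s) ≤ ℬ(F)(γ₂, x, s) + L·‖γ₁ − γ₂‖₁, where the inequality is in the extended reals. -/
/-!
Fix the multiplier `λ` and the action `a`. Moving `γ` changes the bracket in `ℬ` only through the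
term `∑ᵢ γᵢ gⁱ`, which moves by at most `(∑ᵢ Gᵢ)‖γ₁ − γ₂‖₁`, and through the continuation value
`F(γ + λ, ·)`, whose `π`-average moves by at most `L‖γ₁ − γ₂‖₁`. Since
`∑ᵢ Gᵢ + βL = L − R ≤ L` (as `R ≥ |r| ≥ 0`), the bracket moves by at most `L‖γ₁ − γ₂‖₁`, and adding a real
constant commutes with the `sup` over actions and the `inf` over multipliers.
-/

/-- The Bellman operator of the recursive dual (inf-sup) problem, with values in the
extended reals: `ℬ(F)(γ,x,s) = inf_{λ ≥ 0} sup_{a ∈ Ã(x,s)} [ r(x,a,s)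
+ ∑_i (γ_i g^i(x,a,s) + λ_i (g^i(x,a,s) − ḡ_i)) + β ∑_{s'} π(s'|s) F(γ+λ, ζ(x,a,s), s') ]`. -/
noncomputable def bellman {X S A : Type*} [Fintype S] (I : ℕ)
    (Atil : X → S → Set A) (ζ : X → A → S → X) (π : S → S → ℝ) (β : ℝ)
    (r : X → A → S → ℝ) (g : Fin I → X → A → S → ℝ) (gbar : Fin I → ℝ)
    (F : (Fin I → ℝ) → X → S → ℝ) (γ : Fin I → ℝ) (x : X) (s : S) : EReal :=
  ⨅ (lam : Fin I → ℝ) (_ : ∀ i, 0 ≤ lam i), ⨆ a ∈ Atil x s,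
    (((r x a s + ∑ i, (γ i * g i x a s + lam i * (g i x a s - gbar i))
        + β * ∑ s' : S, π s s' * F (fun i => γ i + lam i) (ζ x a s) s' : ℝ) : EReal))

open Finset

namespace EReal

lemma iSup_le_iSup_add_coe {ι : Sort*} {f g : ι → EReal} {c : ℝ} (h : ∀ i, f i ≤ g i + c) :
    ⨆ i, f i ≤ (⨆ i, g i) + c :=
  iSup_le fun i => (h i).trans (add_le_add_left (le_iSup g i) _)

lemma iInf_le_iInf_add_coe {ι : Sort*} {f g : ι → EReal} {c : ℝ} (h : ∀ i, f i ≤ g i + c) :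
    ⨅ i, f i ≤ (⨅ i, g i) + c := by
  have sub_le_iff {a b : EReal} : a - c ≤ b ↔ a ≤ b + c :=
    EReal.sub_le_iff_le_add (.inl (coe_ne_bot c)) (.inl (coe_ne_top c))
  exact sub_le_iff.mp <| le_iInf fun i => sub_le_iff.mpr <| (iInf_le f i).trans (h i)

end EReal

lemma Finset.sum_sub_mul_le_sum_mul_sum_abs_sub {ι : Type*} (s : Finset ι) {u v w G : ι → ℝ}
    (hw : ∀ i ∈ s, |w i| ≤ G i) :
    ∑ i ∈ s, (u i - v i) * w i ≤ (∑ i ∈ s, G i) * ∑ i ∈ s, |u i - v i| := by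
  have hG : ∀ i ∈ s, 0 ≤ G i := fun i hi => (abs_nonneg _).trans (hw i hi)
  calc ∑ i ∈ s, (u i - v i) * w i ≤ ∑ i ∈ s, G i * |u i - v i| := by
        refine sum_le_sum fun i hi => ?_
        calc (u i - v i) * w i ≤ |u i - v i| * |w i| := by rw [← abs_mul]; exact le_abs_self _
          _ ≤ |u i - v i| * G i := by gcongr; exact hw i hi
          _ = G i * |u i - v i| := mul_comm _ _
    _ ≤ (∑ i ∈ s, G i) * ∑ i ∈ s, |u i - v i| := by
        rw [mul_sum]
        exact sum_le_sum fun i hi =>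
          mul_le_mul_of_nonneg_right (single_le_sum hG hi) (abs_nonneg _)

lemma Finset.sum_mul_sub_sum_mul_le {ι : Type*} (s : Finset ι) {p f g : ι → ℝ} {c : ℝ}
    (hp : ∀ i ∈ s, 0 ≤ p i) (hp1 : ∑ i ∈ s, p i = 1) (hfg : ∀ i ∈ s, f i - g i ≤ c) :
    ∑ i ∈ s, p i * f i - ∑ i ∈ s, p i * g i ≤ c :=
  calc ∑ i ∈ s, p i * f i - ∑ i ∈ s, p i * g i = ∑ i ∈ s, p i * (f i - g i) := by
        simp only [mul_sub, sum_sub_distrib]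
    _ ≤ ∑ i ∈ s, p i * c := sum_le_sum fun i hi => mul_le_mul_of_nonneg_left (hfg i hi) (hp i hi)
    _ = c := by rw [← sum_mul, hp1, one_mul]

namespace Bellman

variable {X S A : Type*} [Fintype S] {I : ℕ}

def dualObjective (ζ : X → A → S → X) (π : S → S → ℝ) (β : ℝ)
    (r : X → A → S → ℝ) (g : Fin I → X → A → S → ℝ) (gbar : Fin I → ℝ)
    (F : (Fin I → ℝ) → X → S → ℝ) (γ lam : Fin I → ℝ) (x : X) (a : A) (s : S) : ℝ :=
  r x a s + ∑ i, (γ i * g i x a s + lam i * (g i x a s - gbar i))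
    + β * ∑ s' : S, π s s' * F (fun i => γ i + lam i) (ζ x a s) s'

lemma bellman_eq_iInf_iSup_dualObjective (Atil : X → S → Set A) (ζ : X → A → S → X)
    (π : S → S → ℝ) (β : ℝ) (r : X → A → S → ℝ) (g : Fin I → X → A → S → ℝ)
    (gbar : Fin I → ℝ) (F : (Fin I → ℝ) → X → S → ℝ) (γ : Fin I → ℝ) (x : X) (s : S) :
    bellman I Atil ζ π β r g gbar F γ x s =
      ⨅ (lam : Fin I → ℝ) (_ : ∀ i, 0 ≤ lam i), ⨆ a ∈ Atil x s,
        (dualObjective ζ π β r g gbar F γ lam x a s : EReal) :=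
  rfl

lemma dualObjective_le_add {ζ : X → A → S → X} {π : S → S → ℝ} {β : ℝ}
    {r : X → A → S → ℝ} {g : Fin I → X → A → S → ℝ} {gbar : Fin I → ℝ}
    {F : (Fin I → ℝ) → X → S → ℝ} {R L : ℝ} {G : Fin I → ℝ} {x : X} {a : A} {s : S}
    (hπ : ∀ s', 0 ≤ π s s') (hπsum : ∑ s', π s s' = 1) (hβ0 : 0 ≤ β) (hβ1 : β < 1)
    (hr : |r x a s| ≤ R) (hg : ∀ i, |g i x a s| ≤ G i) (hL : L = (R + ∑ i, G i) / (1 - β))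
    (hF : ∀ γ₁ γ₂ : Fin I → ℝ, (∀ i, 0 ≤ γ₁ i) → (∀ i, 0 ≤ γ₂ i) → ∀ x s,
      |F γ₁ x s - F γ₂ x s| ≤ L * ∑ i, |γ₁ i - γ₂ i|)
    {γ₁ γ₂ lam : Fin I → ℝ} (h₁ : ∀ i, 0 ≤ γ₁ i) (h₂ : ∀ i, 0 ≤ γ₂ i) (hlam : ∀ i, 0 ≤ lam i) :
    dualObjective ζ π β r g gbar F γ₁ lam x a s
      ≤ dualObjective ζ π β r g gbar F γ₂ lam x a s + L * ∑ i, |γ₁ i - γ₂ i| := by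
  set D := ∑ i, |γ₁ i - γ₂ i|
  have hD : 0 ≤ D := sum_nonneg fun i _ => abs_nonneg _
  have hR : 0 ≤ R := (abs_nonneg _).trans hr
  have hLβ : L * (1 - β) = R + ∑ i, G i := by
    rw [hL]; field_simp [(sub_pos.mpr hβ1).ne']
  have hreward : ∑ i, (γ₁ i * g i x a s + lam i * (g i x a s - gbar i))
      - ∑ i, (γ₂ i * g i x a s + lam i * (g i x a s - gbar i)) ≤ (∑ i, G i) * D := by
    rw [← sum_sub_distrib]
    calc _ = ∑ i, (γ₁ i - γ₂ i) * g i x a s := sum_congr rfl fun i _ => by ring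
      _ ≤ _ := sum_sub_mul_le_sum_mul_sum_abs_sub _ fun i _ => hg i
  have hcontinuation : ∑ s', π s s' * F (fun i => γ₁ i + lam i) (ζ x a s) s'
      - ∑ s', π s s' * F (fun i => γ₂ i + lam i) (ζ x a s) s' ≤ L * D := by
    refine sum_mul_sub_sum_mul_le _ (fun s' _ => hπ s') hπsum fun s' _ => ?_
    have hF' := hF (fun i => γ₁ i + lam i) (fun i => γ₂ i + lam i)
      (fun i => add_nonneg (h₁ i) (hlam i)) (fun i => add_nonneg (h₂ i) (hlam i)) (ζ x a s) s'
    simp only [add_sub_add_right_eq_sub] at hF'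
    exact (le_abs_self _).trans hF'
  have hcontraction : (∑ i, G i) * D + β * (L * D) ≤ L * D := by
    linear_combination -D * hLβ + mul_nonneg hR hD
  unfold dualObjective
  linarith [mul_le_mul_of_nonneg_left hcontinuation hβ0]

end Bellman

theorem stmt18_general {X S A : Type*} [Fintype S]
    (I : ℕ)
    (Atil : X → S → Set A)
    (ζ : X → A → S → X) (π : S → S → ℝ)
    (hπpos : ∀ s s', 0 < π s s') (hπsum : ∀ s, ∑ s' : S, π s s' = 1)
    (β : ℝ) (hβ0 : 0 < β) (hβ1 : β < 1)
    (r : X → A → S → ℝ) (R : ℝ) (hr : ∀ x a s, |r x a s| ≤ R)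
    (g : Fin I → X → A → S → ℝ) (G : Fin I → ℝ) (hg : ∀ i x a s, |g i x a s| ≤ G i)
    (gbar : Fin I → ℝ)
    (L : ℝ) (hL : L = (R + ∑ i, G i) / (1 - β))
    (F : (Fin I → ℝ) → X → S → ℝ)
    (hF : ∀ γ₁ γ₂ : Fin I → ℝ, (∀ i, 0 ≤ γ₁ i) → (∀ i, 0 ≤ γ₂ i) → ∀ x s,
      |F γ₁ x s - F γ₂ x s| ≤ L * ∑ i, |γ₁ i - γ₂ i|) :
    ∀ γ₁ γ₂ : Fin I → ℝ, (∀ i, 0 ≤ γ₁ i) → (∀ i, 0 ≤ γ₂ i) → ∀ x s,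
      bellman I Atil ζ π β r g gbar F γ₁ x s
        ≤ bellman I Atil ζ π β r g gbar F γ₂ x s
          + ((L * ∑ i, |γ₁ i - γ₂ i| : ℝ) : EReal) := by
  intro γ₁ γ₂ h₁ h₂ x s
  simp only [Bellman.bellman_eq_iInf_iSup_dualObjective]
  refine EReal.iInf_le_iInf_add_coe fun lam => EReal.iInf_le_iInf_add_coe fun hlam =>
    EReal.iSup_le_iSup_add_coe fun a => EReal.iSup_le_iSup_add_coe fun _ => ?_
  exact_mod_cast Bellman.dualObjective_le_add (fun s' => (hπpos s s').le) (hπsum s) hβ0.le hβ1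
    (hr x a s) (fun i => hg i x a s) hL hF h₁ h₂ hlam

/-- **the Bellman operator preserves `L`-Lipschitz continuity in the
multiplier.** With finite state and action sets, positive transition probabilities
summing to one, `β ∈ (0,1)`, bounded data `|r| ≤ R`, `|g^i| ≤ G_i`, nonempty feasible
action sets, and `L = (R + ∑_i G_i)/(1 − β)`: if `F` is `L`-Lipschitz in `γ` for the
`ℓ¹` norm on `[0,∞)^I`, then `ℬ(F)(γ₁,x,s) ≤ ℬ(F)(γ₂,x,s) + L‖γ₁ − γ₂‖₁` for all
`γ₁, γ₂ ∈ [0,∞)^I`, `x`, `s` (in the extended reals). -/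
theorem stmt18 {X S A : Type*} [Fintype S] [Nonempty S] [Fintype A] [Nonempty A]
    (I : ℕ) (hI : 1 ≤ I)
    (Atil : X → S → Set A) (hAtil : ∀ x s, (Atil x s).Nonempty)
    (ζ : X → A → S → X) (π : S → S → ℝ)
    (hπpos : ∀ s s', 0 < π s s') (hπsum : ∀ s, ∑ s' : S, π s s' = 1)
    (β : ℝ) (hβ0 : 0 < β) (hβ1 : β < 1)
    (r : X → A → S → ℝ) (R : ℝ) (hr : ∀ x a s, |r x a s| ≤ R)
    (g : Fin I → X → A → S → ℝ) (G : Fin I → ℝ) (hg : ∀ i x a s, |g i x a s| ≤ G i)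
    (gbar : Fin I → ℝ)
    (L : ℝ) (hL : L = (R + ∑ i, G i) / (1 - β))
    (F : (Fin I → ℝ) → X → S → ℝ)
    (hF : ∀ γ₁ γ₂ : Fin I → ℝ, (∀ i, 0 ≤ γ₁ i) → (∀ i, 0 ≤ γ₂ i) → ∀ x s,
      |F γ₁ x s - F γ₂ x s| ≤ L * ∑ i, |γ₁ i - γ₂ i|) :
    ∀ γ₁ γ₂ : Fin I → ℝ, (∀ i, 0 ≤ γ₁ i) → (∀ i, 0 ≤ γ₂ i) → ∀ x s,
      bellman I Atil ζ π β r g gbar F γ₁ x s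
        ≤ bellman I Atil ζ π β r g gbar F γ₂ x s
          + ((L * ∑ i, |γ₁ i - γ₂ i| : ℝ) : EReal) :=
  stmt18_general I Atil ζ π hπpos hπsum β hβ0 hβ1 r R hr g G hg gbar L hL F hF
end
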